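/- arXiv:2208.14673 — 8 statements merged into one kernel-verified Lean document; each statement's English description precedes it below -/
import Mathlib

section
/- Assume (A1) r = Xᵀy has all coordinates strictly positive and (A2) the off-diagonal entries of M = XᵀX are nonpositive (M_{ij} ≤ 0 for all i ≠ j). Then the matrix M = XᵀX ∈ ℝ^{d×d} is positive definite; in particular, since M = XᵀX with X ∈ ℝ^{n×d}, necessarily n ≥ d. -/
/-!
If `X v = 0`, the sign pattern of `M = XᵀX` gives `‖X |v|‖² = |v|ᵀ M |v| ≤ vᵀ M v = ‖X v‖² = 0`,
so `X |v| = 0` as well. Then `rᵀ |v| = yᵀ X |v| = 0`, and `r > 0` forces `v = 0`. Hence `X` is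
injective, which makes `XᵀX` positive definite and gives `d ≤ n`.
-/

open Matrix

namespace Matrix

variable {ι m : Type*} [Fintype ι] {R : Type*} [CommRing R] [LinearOrder R] [IsStrictOrderedRing R]

theorem abs_dotProduct_mulVec_abs_le {A : Matrix ι ι R} (hA : ∀ i j, i ≠ j → A i j ≤ 0)
    (v : ι → R) : |v| ⬝ᵥ (A *ᵥ |v|) ≤ v ⬝ᵥ (A *ᵥ v) := by
  simp only [dotProduct, mulVec, Finset.mul_sum, Pi.abs_apply]
  refine Finset.sum_le_sum fun i _ => Finset.sum_le_sum fun j _ => ?_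
  rcases eq_or_ne i j with rfl | hij
  · exact le_of_eq (by linear_combination A i i * abs_mul_abs_self (v i))
  · nlinarith [hA i j hij, abs_mul_abs_self (v i), le_abs_self (v i * v j), abs_mul (v i) (v j)]

variable [Fintype m]

theorem mulVec_abs_eq_zero {X : Matrix m ι R} (hX : ∀ i j, i ≠ j → (Xᵀ * X) i j ≤ 0)
    {v : ι → R} (hv : X *ᵥ v = 0) : X *ᵥ |v| = 0 := by
  have hquad : ∀ u, u ⬝ᵥ ((Xᵀ * X) *ᵥ u) = (X *ᵥ u) ⬝ᵥ (X *ᵥ u) := fun u => by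
    rw [← mulVec_mulVec, dotProduct_mulVec u, vecMul_transpose]
  have hle := abs_dotProduct_mulVec_abs_le hX v
  rw [hquad, hquad, hv, dotProduct_zero] at hle
  exact dotProduct_self_eq_zero.1 (le_antisymm hle (Finset.sum_nonneg fun i _ => mul_self_nonneg _))

theorem mulVec_injective_of_transpose_mulVec_pos {X : Matrix m ι R} {y : m → R}
    (hy : ∀ i, 0 < (Xᵀ *ᵥ y) i) (hX : ∀ i j, i ≠ j → (Xᵀ * X) i j ≤ 0) :
    Function.Injective X.mulVec := by
  suffices h : ∀ v, X *ᵥ v = 0 → v = 0 from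
    fun v w hvw => sub_eq_zero.1 <| h _ <| by rw [mulVec_sub, hvw, sub_self]
  intro v hv
  have hzero : (Xᵀ *ᵥ y) ⬝ᵥ |v| = 0 := by
    rw [mulVec_transpose, ← dotProduct_mulVec, mulVec_abs_eq_zero hX hv, dotProduct_zero]
  funext i
  have hterm := (Finset.sum_eq_zero_iff_of_nonneg fun j _ =>
    mul_nonneg (hy j).le (abs_nonneg (v j))).1 hzero i (Finset.mem_univ i)
  simpa [(hy i).ne'] using hterm

end Matrix

theorem dln_posdef_general (n d : ℕ)
    (X : Matrix (Fin n) (Fin d) ℝ) (y : Fin n → ℝ)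
    (M : Matrix (Fin d) (Fin d) ℝ) (r : Fin d → ℝ)
    (hM : M = Xᵀ * X) (hr : r = Xᵀ *ᵥ y)
    (hA1 : ∀ i, 0 < r i)
    (hA2 : ∀ i j, i ≠ j → M i j ≤ 0) :
    M.PosDef ∧ d ≤ n := by
  subst hM hr
  have hinj := mulVec_injective_of_transpose_mulVec_pos hA1 hA2
  refine ⟨by simpa using PosDef.conjTranspose_mul_self X hinj, ?_⟩
  simpa using LinearMap.finrank_le_finrank_of_injective (f := X.mulVecLin) hinj

/-- Under (A1) `r = Xᵀy > 0` and (A2) `Mᵢⱼ ≤ 0` for `i ≠ j` where `M = XᵀX`,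
the matrix `M` is positive definite; in particular `n ≥ d`. -/
theorem dln_posdef (n d : ℕ) (hn : 0 < n) (hd : 0 < d)
    (X : Matrix (Fin n) (Fin d) ℝ) (y : Fin n → ℝ)
    (M : Matrix (Fin d) (Fin d) ℝ) (r : Fin d → ℝ)
    (hM : M = Xᵀ * X) (hr : r = Xᵀ *ᵥ y)
    (hA1 : ∀ i, 0 < r i)
    (hA2 : ∀ i j, i ≠ j → M i j ≤ 0) :
    M.PosDef ∧ d ≤ n :=
  dln_posdef_general n d X y M r hM hr hA1 hA2
end

section
/- Assume (A1) r = Xᵀy has all coordinates strictly positive and (A2) M_{ij} ≤ 0 for all i ≠ j, where M = XᵀX. Then for every subset I ⊆ {1,…,d}, there is a unique vector θ ∈ ℝ^d with θ ≥ 0, θ_i (r_i − (Mθ)_i) = 0 for all i, and support {i : θ_i > 0} = I; namely θ = θ_*^{(I)} given by (θ_*^{(I)})_I = (M_{II})⁻¹ r_I and (θ_*^{(I)})_i = 0 for i ∉ I. In particular, the vector field Ψ(θ)_i = θ_i(r_i − (Mθ)_i) has exactly 2^d nonnegative fixed points. -/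
open Matrix

section Aux
variable {ι : Type*} [Fintype ι] [DecidableEq ι]

lemma cross_nonpos (A : Matrix ι ι ℝ) (hz : ∀ i j, i ≠ j → A i j ≤ 0)
    (p m : ι → ℝ) (hp : ∀ i, 0 ≤ p i) (hm : ∀ i, 0 ≤ m i)
    (hpm : ∀ i, p i * m i = 0) : p ⬝ᵥ (A *ᵥ m) ≤ 0 := by
  simp only [mulVec, dotProduct]
  apply Finset.sum_nonpos
  intro i _
  rw [Finset.mul_sum]
  apply Finset.sum_nonpos
  intro j _
  by_cases h : i = j
  · subst h
    rcases mul_eq_zero.mp (hpm i) with h0 | h0 <;> simp [h0]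
  · have h0 : 0 ≤ (-A i j) * (p i * m j) :=
      mul_nonneg (by linarith [hz i j h]) (mul_nonneg (hp i) (hm j))
    nlinarith [h0]

lemma dot_eq_zero (p b : ι → ℝ) (hp : ∀ i, 0 ≤ p i) (hb : ∀ i, 0 < b i)
    (h : p ⬝ᵥ b ≤ 0) : ∀ i, p i = 0 := by
  have hnn : ∀ i ∈ Finset.univ, 0 ≤ p i * b i :=
    fun i _ => mul_nonneg (hp i) (hb i).le
  have hsum : ∑ i, p i * b i = 0 :=
    le_antisymm (by simpa [dotProduct] using h) (Finset.sum_nonneg hnn)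
  intro i
  have := (Finset.sum_eq_zero_iff_of_nonneg hnn).mp hsum i (Finset.mem_univ i)
  rcases mul_eq_zero.mp this with h0 | h0
  · exact h0
  · exact absurd h0 (hb i).ne'

lemma key_pos (A : Matrix ι ι ℝ) (b θ : ι → ℝ)
    (hpsd : ∀ v : ι → ℝ, 0 ≤ v ⬝ᵥ (A *ᵥ v))
    (hz : ∀ i j, i ≠ j → A i j ≤ 0)
    (hb : ∀ i, 0 < b i)
    (hθ : A *ᵥ θ = b) : ∀ i, 0 < θ i := by
  set p : ι → ℝ := fun i => max (θ i) 0 with hpdef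
  set m : ι → ℝ := fun i => max (-θ i) 0 with hmdef
  have hp : ∀ i, 0 ≤ p i := fun i => le_max_right _ _
  have hm : ∀ i, 0 ≤ m i := fun i => le_max_right _ _
  have hpm : ∀ i, p i * m i = 0 := by
    intro i; rcases le_total (θ i) 0 with h | h
    · have : p i = 0 := max_eq_right h
      simp [this]
    · have : m i = 0 := max_eq_right (neg_nonpos.mpr h)
      simp [this]
  have hθpm : θ = p - m := by
    funext i
    rcases le_total (θ i) 0 with h | h
    · simp only [hpdef, hmdef, Pi.sub_apply, max_eq_right h,
        max_eq_left (neg_nonneg.mpr h)]; ring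
    · simp only [hpdef, hmdef, Pi.sub_apply, max_eq_left h,
        max_eq_right (neg_nonpos.mpr h)]; ring
  have h1 : m ⬝ᵥ b = m ⬝ᵥ (A *ᵥ p) - m ⬝ᵥ (A *ᵥ m) := by
    rw [← hθ, hθpm, mulVec_sub, dotProduct_sub]
  have h2 : m ⬝ᵥ (A *ᵥ p) ≤ 0 :=
    cross_nonpos A hz m p hm hp (fun i => by rw [mul_comm]; exact hpm i)
  have h3 : m ⬝ᵥ b ≤ 0 := by have := hpsd m; linarith
  have h4 : ∀ i, m i = 0 := dot_eq_zero m b hm hb h3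
  have hθnn : ∀ i, 0 ≤ θ i := by
    intro i
    have h5 : -θ i ≤ 0 := by
      have := le_max_left (-θ i) 0
      rw [show max (-θ i) 0 = m i from rfl, h4 i] at this
      exact this
    linarith
  intro i
  have hbi : b i = ∑ j, A i j * θ j := by rw [← hθ]; rfl
  have hle : ∑ j, A i j * θ j ≤ A i i * θ i := by
    rw [← Finset.add_sum_erase _ _ (Finset.mem_univ i)]
    have : ∑ j ∈ Finset.univ.erase i, A i j * θ j ≤ 0 := by
      apply Finset.sum_nonpos
      intro j hj
      have hji : j ≠ i := Finset.ne_of_mem_erase hj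
      have := hz i j (Ne.symm hji)
      have := hθnn j
      nlinarith
    linarith
  have : 0 < A i i * θ i := by
    have hb' := hb i
    rw [hbi] at hb'
    linarith
  rcases lt_or_eq_of_le (hθnn i) with h | h
  · exact h
  · exfalso; rw [← h, mul_zero] at this; exact lt_irrefl 0 this

lemma key_det (A : Matrix ι ι ℝ) (b : ι → ℝ)
    (hpsd : ∀ v : ι → ℝ, 0 ≤ v ⬝ᵥ (A *ᵥ v))
    (hker : ∀ v : ι → ℝ, v ⬝ᵥ (A *ᵥ v) = 0 → v ⬝ᵥ b = 0)
    (hz : ∀ i j, i ≠ j → A i j ≤ 0)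
    (hb : ∀ i, 0 < b i) : IsUnit A.det := by
  rw [isUnit_iff_ne_zero]
  intro hdet
  obtain ⟨v, hv0, hAv⟩ := (Matrix.exists_mulVec_eq_zero_iff).mpr hdet
  set p : ι → ℝ := fun i => max (v i) 0 with hpdef
  set m : ι → ℝ := fun i => max (-v i) 0 with hmdef
  have hp : ∀ i, 0 ≤ p i := fun i => le_max_right _ _
  have hm : ∀ i, 0 ≤ m i := fun i => le_max_right _ _
  have hpm : ∀ i, p i * m i = 0 := by
    intro i; rcases le_total (v i) 0 with h | h
    · have : p i = 0 := max_eq_right h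
      simp [this]
    · have : m i = 0 := max_eq_right (neg_nonpos.mpr h)
      simp [this]
  have hvpm : v = p - m := by
    funext i
    rcases le_total (v i) 0 with h | h
    · simp only [hpdef, hmdef, Pi.sub_apply, max_eq_right h,
        max_eq_left (neg_nonneg.mpr h)]; ring
    · simp only [hpdef, hmdef, Pi.sub_apply, max_eq_left h,
        max_eq_right (neg_nonpos.mpr h)]; ring
  have hAp : ∀ w : ι → ℝ, w ⬝ᵥ (A *ᵥ v) = 0 := fun w => by rw [hAv, dotProduct_zero]
  have hcross : p ⬝ᵥ (A *ᵥ m) ≤ 0 := cross_nonpos A hz p m hp hm hpm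
  have hcross' : m ⬝ᵥ (A *ᵥ p) ≤ 0 :=
    cross_nonpos A hz m p hm hp (fun i => by rw [mul_comm]; exact hpm i)
  have hpAp : p ⬝ᵥ (A *ᵥ p) = 0 := by
    have h1 : p ⬝ᵥ (A *ᵥ v) = 0 := hAp p
    rw [hvpm, mulVec_sub, dotProduct_sub] at h1
    have := hpsd p
    linarith
  have hmAm : m ⬝ᵥ (A *ᵥ m) = 0 := by
    have h1 : m ⬝ᵥ (A *ᵥ v) = 0 := hAp m
    rw [hvpm, mulVec_sub, dotProduct_sub] at h1
    have := hpsd m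
    linarith
  have hp0 : ∀ i, p i = 0 := dot_eq_zero p b hp hb (le_of_eq (hker p hpAp))
  have hm0 : ∀ i, m i = 0 := dot_eq_zero m b hm hb (le_of_eq (hker m hmAm))
  apply hv0
  funext i
  rw [hvpm]; simp [hp0 i, hm0 i]

end Aux

/-- The principal submatrix `M_{II}` of `M` indexed by a subset `I`. -/
def subMat {d : ℕ} (M : Matrix (Fin d) (Fin d) ℝ) (I : Finset (Fin d)) :
    Matrix I I ℝ := fun a b => M a b

/-- The subvector `r_I` of `r` indexed by a subset `I`. -/
def subVec {d : ℕ} (r : Fin d → ℝ) (I : Finset (Fin d)) : I → ℝ :=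
  fun a => r a

/-- The fixed point `θ_*^{(I)}` supported on `I`,
with `(θ_*^{(I)})_I = (M_{II})⁻¹ r_I` and zero outside `I`. -/
noncomputable def thetaStar {d : ℕ} (M : Matrix (Fin d) (Fin d) ℝ) (r : Fin d → ℝ)
    (I : Finset (Fin d)) : Fin d → ℝ :=
  fun i => if h : i ∈ I then ((subMat M I)⁻¹ *ᵥ subVec r I) ⟨i, h⟩ else 0

/-- Under (A1) and (A2), for every `I ⊆ {1,…,d}` there is a unique
nonnegative fixed point of `Ψ(θ)ᵢ = θᵢ (rᵢ − (Mθ)ᵢ)` with support `I`, namely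
`θ_*^{(I)}`; in particular there are exactly `2^d` nonnegative fixed points. -/
theorem dln_fixed_points_unique (n d : ℕ) (hn : 0 < n) (hd : 0 < d)
    (X : Matrix (Fin n) (Fin d) ℝ) (y : Fin n → ℝ)
    (M : Matrix (Fin d) (Fin d) ℝ) (r : Fin d → ℝ)
    (hM : M = Xᵀ * X) (hr : r = Xᵀ *ᵥ y)
    (hA1 : ∀ i, 0 < r i)
    (hA2 : ∀ i j, i ≠ j → M i j ≤ 0) :
    (∀ I : Finset (Fin d), ∀ θ : Fin d → ℝ,
      ((∀ i, 0 ≤ θ i) ∧ (∀ i, θ i * (r i - (M *ᵥ θ) i) = 0) ∧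
        {i : Fin d | 0 < θ i} = ↑I) ↔ θ = thetaStar M r I) ∧
    {θ : Fin d → ℝ | (∀ i, 0 ≤ θ i) ∧
      ∀ i, θ i * (r i - (M *ᵥ θ) i) = 0}.ncard = 2 ^ d := by
  classical
  -- key facts about each principal submatrix
  have key : ∀ I : Finset (Fin d),
      IsUnit (subMat M I).det ∧
      subMat M I *ᵥ ((subMat M I)⁻¹ *ᵥ subVec r I) = subVec r I ∧
      (∀ a, 0 < ((subMat M I)⁻¹ *ᵥ subVec r I) a) := by
    intro I
    set XI : Matrix (Fin n) I ℝ := X.submatrix id (fun a => (a : Fin d)) with hXI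
    have hAeq : subMat M I = XIᵀ * XI := by
      ext a b
      simp [subMat, hM, Matrix.mul_apply, hXI]
    have hbv : subVec r I = XIᵀ *ᵥ y := by
      ext a; simp [subVec, hr, mulVec, dotProduct, hXI]
    have hquad : ∀ v : I → ℝ, v ⬝ᵥ (subMat M I *ᵥ v) = (XI *ᵥ v) ⬝ᵥ (XI *ᵥ v) := by
      intro v
      rw [hAeq, ← mulVec_mulVec, dotProduct_mulVec, vecMul_transpose]
    have hpsd : ∀ v : I → ℝ, 0 ≤ v ⬝ᵥ (subMat M I *ᵥ v) := by
      intro v; rw [hquad]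
      exact Finset.sum_nonneg fun k _ => mul_self_nonneg _
    have hker : ∀ v : I → ℝ, v ⬝ᵥ (subMat M I *ᵥ v) = 0 → v ⬝ᵥ subVec r I = 0 := by
      intro v hv
      rw [hquad] at hv
      simp only [dotProduct] at hv
      have hXv : XI *ᵥ v = 0 := by
        funext k
        have h0 := (Finset.sum_eq_zero_iff_of_nonneg
          (fun k _ => mul_self_nonneg ((XI *ᵥ v) k))).mp hv k (Finset.mem_univ k)
        simpa [mul_self_eq_zero] using h0
      rw [hbv, dotProduct_mulVec, vecMul_transpose, hXv, zero_dotProduct]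
    have hz : ∀ a b : I, a ≠ b → subMat M I a b ≤ 0 := fun a b h =>
      hA2 a b (fun hc => h (Subtype.ext hc))
    have hbpos : ∀ a : I, 0 < subVec r I a := fun a => hA1 a
    have hdet := key_det _ _ hpsd hker hz hbpos
    have hsolve : subMat M I *ᵥ ((subMat M I)⁻¹ *ᵥ subVec r I) = subVec r I := by
      rw [mulVec_mulVec, Matrix.mul_nonsing_inv _ hdet, one_mulVec]
    exact ⟨hdet, hsolve, key_pos _ (subVec r I) _ hpsd hz hbpos hsolve⟩
  -- summation over a subset
  have hsum : ∀ (θ : Fin d → ℝ) (I : Finset (Fin d)), (∀ j ∉ I, θ j = 0) →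
      ∀ i, (M *ᵥ θ) i = ∑ a : I, M i a * θ a := by
    intro θ I h0 i
    simp only [mulVec, dotProduct]
    rw [Finset.sum_coe_sort I (fun j => M i j * θ j)]
    exact (Finset.sum_subset I.subset_univ (fun j _ hj => by rw [h0 j hj, mul_zero])).symm
  have main : ∀ I : Finset (Fin d), ∀ θ : Fin d → ℝ,
      ((∀ i, 0 ≤ θ i) ∧ (∀ i, θ i * (r i - (M *ᵥ θ) i) = 0) ∧
        {i : Fin d | 0 < θ i} = ↑I) ↔ θ = thetaStar M r I := by
    intro I θ
    obtain ⟨hdet, hsolve, hu⟩ := key I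
    set u : I → ℝ := (subMat M I)⁻¹ *ᵥ subVec r I with hudef
    have htI : ∀ (j : Fin d) (h : j ∈ I), thetaStar M r I j = u ⟨j, h⟩ :=
      fun j h => dif_pos h
    have ht0 : ∀ j ∉ I, thetaStar M r I j = 0 := fun j hj => dif_neg hj
    constructor
    · rintro ⟨hnn, hfix, hsupp⟩
      have hzero : ∀ j ∉ I, θ j = 0 := by
        intro j hj
        have h1 : j ∉ {i : Fin d | 0 < θ i} := by
          rw [hsupp]; simpa using hj
        have h2 : ¬ (0 < θ j) := h1
        exact le_antisymm (not_lt.mp h2) (hnn j)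
      have hposI : ∀ j ∈ I, 0 < θ j := by
        intro j hj
        have : j ∈ {i : Fin d | 0 < θ i} := by rw [hsupp]; simpa using hj
        exact this
      have hMθ : ∀ j ∈ I, (M *ᵥ θ) j = r j := by
        intro j hj
        rcases mul_eq_zero.mp (hfix j) with h | h
        · exact absurd h (hposI j hj).ne'
        · have := sub_eq_zero.mp h; linarith
      set w : I → ℝ := fun a => θ a with hwdef
      have hw : subMat M I *ᵥ w = subVec r I := by
        funext a
        have h1 : (subMat M I *ᵥ w) a = ∑ b : I, M a b * θ b := by
          simp only [mulVec, dotProduct, subMat, hwdef]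
        rw [h1, ← hsum θ I hzero a]
        exact hMθ a a.2
      have hwu : w = u := by
        rw [hudef, ← hw, mulVec_mulVec, Matrix.nonsing_inv_mul _ hdet, one_mulVec]
      funext i
      by_cases h : i ∈ I
      · rw [htI i h, ← hwu]
      · rw [ht0 i h]; exact hzero i h
    · rintro rfl
      refine ⟨?_, ?_, ?_⟩
      · intro i; by_cases h : i ∈ I
        · rw [htI i h]; exact (hu _).le
        · rw [ht0 i h]
      · intro i
        by_cases h : i ∈ I
        · have hMt : (M *ᵥ thetaStar M r I) i = r i := by
            rw [hsum _ I ht0 i]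
            have h2 : ∑ a : I, M i a * thetaStar M r I a = (subMat M I *ᵥ u) ⟨i, h⟩ := by
              simp only [mulVec, dotProduct, subMat]
              apply Finset.sum_congr rfl
              intro a _
              rw [htI a a.2]
            rw [h2, hsolve]
            rfl
          rw [hMt]; ring
        · rw [ht0 i h]; ring
      · ext i
        simp only [Set.mem_setOf_eq, Finset.mem_coe]
        constructor
        · intro hpos
          by_contra h
          rw [ht0 i h] at hpos
          exact lt_irrefl 0 hpos
        · intro h
          rw [htI i h]
          exact hu _
  refine ⟨main, ?_⟩
  have hset : {θ : Fin d → ℝ | (∀ i, 0 ≤ θ i) ∧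
      ∀ i, θ i * (r i - (M *ᵥ θ) i) = 0} =
      Set.range (fun I : Finset (Fin d) => thetaStar M r I) := by
    ext θ
    simp only [Set.mem_setOf_eq, Set.mem_range]
    constructor
    · rintro ⟨hnn, hfix⟩
      refine ⟨Finset.univ.filter (fun i => 0 < θ i), ?_⟩
      symm
      rw [← main]
      refine ⟨hnn, hfix, ?_⟩
      ext i
      simp
    · rintro ⟨I, rfl⟩
      obtain ⟨h1, h2, _⟩ := (main I (thetaStar M r I)).mpr rfl
      exact ⟨h1, h2⟩
  rw [hset]
  have hinj : Function.Injective (fun I : Finset (Fin d) => thetaStar M r I) := by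
    intro I J h
    obtain ⟨_, _, hI⟩ := (main I (thetaStar M r I)).mpr rfl
    obtain ⟨_, _, hJ⟩ := (main J (thetaStar M r J)).mpr rfl
    apply Finset.coe_injective
    rw [← hI, ← hJ, show thetaStar M r I = thetaStar M r J from h]
  rw [← Set.image_univ, Set.ncard_image_of_injective _ hinj, Set.ncard_univ,
    Nat.card_eq_fintype_card, Fintype.card_finset, Fintype.card_fin]
end

section
/- Assume (A1) r has all coordinates strictly positive and (A2) M_{ij} ≤ 0 for all i ≠ j. Then there exists ε₀ > 0 such that for all ε ∈ (0, ε₀], for every solution θ^{(ε)} : [0,∞) → ℝ^d of the DLN ODE dθ_i/dt = θ_i (r_i − (Mθ)_i) with initial condition θ_i^{(ε)}(0) = C_i ε^{k_i}, and for every i ∈ {1,…,d}, the function t ↦ θ_i^{(ε)}(t) is nondecreasing on [0,∞). -/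
open Matrix Set Filter Topology Real

/-! With `g = r - M θ`, the ODE gives `g' = -M (θ ⊙ g)`. For small `ε`, both `θ(0)` and `g(0)` are
positive. While `θ, g ≥ 0` on `[0, T]`, each `θᵢ` is nondecreasing (`θᵢ' = θᵢ gᵢ`), and because the
off-diagonal entries of `M` are `≤ 0` we get `gᵢ' ≥ -|Mᵢᵢ| θᵢ(T) gᵢ`, so by Grönwall `gᵢ(T) > 0`.
Strict positivity persists for a short while, so continuous induction gives `θ, g ≥ 0` for all
time, and then `θ' = θ ⊙ g ≥ 0`. -/

theorem mul_exp_neg_mul_le_of_deriv_right_ge {f f' : ℝ → ℝ} {a b L : ℝ}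
    (hf : ContinuousOn f (Icc a b)) (hf' : ∀ x ∈ Ico a b, HasDerivWithinAt f (f' x) (Ici x) x)
    (bound : ∀ x ∈ Ico a b, -(L * f x) ≤ f' x) {x : ℝ} (hx : x ∈ Icc a b) :
    f a * exp (-(L * (x - a))) ≤ f x := by
  have h := le_gronwallBound_of_liminf_deriv_right_le (f := -f) (f' := -f') (δ := -f a)
    (K := -L) (ε := 0) hf.neg (fun x hx _ hr => ((hf' x hx).neg.liminf_right_slope_le hr))
    le_rfl (fun x hx => by simpa using neg_le_neg (bound x hx)) x hx
  rw [gronwallBound_ε0] at h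
  simp only [Pi.neg_apply, neg_mul] at h
  linarith

theorem monotoneOn_of_hasDerivAt_nonneg {f f' : ℝ → ℝ} {s : Set ℝ} (hs : Convex ℝ s)
    (hf : ∀ x ∈ s, HasDerivAt f (f' x) x) (hf' : ∀ x ∈ interior s, 0 ≤ f' x) :
    MonotoneOn f s :=
  monotoneOn_of_hasDerivWithinAt_nonneg hs
    (fun x hx => (hf x hx).continuousAt.continuousWithinAt)
    (fun x hx => (hf x (interior_subset hx)).hasDerivWithinAt) hf'

theorem HasDerivAt.mulVec {m n : Type*} [Fintype n] {θ : ℝ → n → ℝ} {θ' : n → ℝ} {t : ℝ}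
    (h : HasDerivAt θ θ' t) (M : Matrix m n ℝ) :
    HasDerivAt (fun τ => M *ᵥ θ τ) (M *ᵥ θ') t := by
  refine hasDerivAt_pi.2 fun i => ?_
  show HasDerivAt (fun τ => ∑ j, M i j * θ τ j) (∑ j, M i j * θ' j) t
  exact HasDerivAt.fun_sum fun j _ => (hasDerivAt_pi.1 h j).const_mul (M i j)

theorem mulVec_apply_le_abs_diag_mul {n : Type*} [Fintype n] {M : Matrix n n ℝ}
    (hM : ∀ i j, i ≠ j → M i j ≤ 0) {w : n → ℝ} (hw : 0 ≤ w) (i : n) :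
    (M *ᵥ w) i ≤ |M i i| * w i := by
  classical
  have hoff : ∑ j ∈ Finset.univ.erase i, M i j * w j ≤ 0 :=
    Finset.sum_nonpos fun j hj =>
      mul_nonpos_of_nonpos_of_nonneg (hM i j (Finset.ne_of_mem_erase hj).symm) (hw j)
  calc (M *ᵥ w) i = M i i * w i + ∑ j ∈ Finset.univ.erase i, M i j * w j :=
        (Finset.add_sum_erase _ _ (Finset.mem_univ i)).symm
    _ ≤ M i i * w i := add_le_of_nonpos_right hoff
    _ ≤ |M i i| * w i := mul_le_mul_of_nonneg_right (le_abs_self _) (hw i)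

section DLN

variable {d : ℕ} {M : Matrix (Fin d) (Fin d) ℝ} {r : Fin d → ℝ} {θ : ℝ → Fin d → ℝ}

theorem dln_hasDerivAt_residual {t : ℝ} (hθ : HasDerivAt θ (θ t * (r - M *ᵥ θ t)) t) :
    HasDerivAt (fun τ => r - M *ᵥ θ τ) (-(M *ᵥ (θ t * (r - M *ᵥ θ t)))) t :=
  (hθ.mulVec M).const_sub r

theorem dln_pos_of_nonneg_on_Ico (hA2 : ∀ i j, i ≠ j → M i j ≤ 0)
    (hθ : ∀ t ≥ 0, HasDerivAt θ (θ t * (r - M *ᵥ θ t)) t)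
    (h0 : ∀ i, 0 < θ 0 i ∧ 0 < (r - M *ᵥ θ 0) i) {T : ℝ} (hT : 0 ≤ T)
    (hnn : ∀ t ∈ Ico 0 T, 0 ≤ θ t ∧ 0 ≤ r - M *ᵥ θ t) (i : Fin d) :
    0 < θ T i ∧ 0 < (r - M *ᵥ θ T) i := by
  have hθi : ∀ t ≥ 0, HasDerivAt (θ · i) (θ t i * (r - M *ᵥ θ t) i) t :=
    fun t ht => hasDerivAt_pi.1 (hθ t ht) i
  have hgi : ∀ t ≥ 0, HasDerivAt (fun τ => (r - M *ᵥ θ τ) i)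
      (-(M *ᵥ (θ t * (r - M *ᵥ θ t))) i) t :=
    fun t ht => hasDerivAt_pi.1 (dln_hasDerivAt_residual (hθ t ht)) i
  have hmono : MonotoneOn (θ · i) (Icc 0 T) := by
    refine monotoneOn_of_hasDerivAt_nonneg (convex_Icc 0 T) (fun t ht => hθi t ht.1) ?_
    rw [interior_Icc]
    exact fun t ht => mul_nonneg ((hnn t (Ioo_subset_Ico_self ht)).1 i)
      ((hnn t (Ioo_subset_Ico_self ht)).2 i)
  refine ⟨(h0 i).1.trans_le (hmono ⟨le_rfl, hT⟩ ⟨hT, le_rfl⟩ hT), ?_⟩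
  have hgrowth : ∀ t ∈ Ico 0 T, -(|M i i| * θ T i * (r - M *ᵥ θ t) i) ≤
      -(M *ᵥ (θ t * (r - M *ᵥ θ t))) i := by
    intro t ht
    obtain ⟨hθt, hgt⟩ := hnn t ht
    have hθtT : θ t i ≤ θ T i := hmono (Ico_subset_Icc_self ht) ⟨hT, le_rfl⟩ ht.2.le
    refine neg_le_neg ?_
    calc (M *ᵥ (θ t * (r - M *ᵥ θ t))) i ≤ |M i i| * (θ t i * (r - M *ᵥ θ t) i) :=
          mulVec_apply_le_abs_diag_mul hA2 (mul_nonneg hθt hgt) i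
      _ ≤ |M i i| * θ T i * (r - M *ᵥ θ t) i := by
          rw [← mul_assoc]; gcongr
          exact hgt i
  have hgronwall := mul_exp_neg_mul_le_of_deriv_right_ge
    (fun t ht => (hgi t ht.1).continuousAt.continuousWithinAt)
    (fun t ht => (hgi t ht.1).hasDerivWithinAt) hgrowth ⟨hT, le_rfl⟩
  exact (mul_pos (h0 i).2 (exp_pos _)).trans_le hgronwall

theorem dln_nonneg (hA2 : ∀ i j, i ≠ j → M i j ≤ 0)
    (hθ : ∀ t ≥ 0, HasDerivAt θ (θ t * (r - M *ᵥ θ t)) t)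
    (h0 : ∀ i, 0 < θ 0 i ∧ 0 < (r - M *ᵥ θ 0) i) {t : ℝ} (ht : 0 ≤ t) :
    0 ≤ θ t ∧ 0 ≤ r - M *ᵥ θ t := by
  set s := {t | 0 ≤ θ t ∧ 0 ≤ r - M *ᵥ θ t}
  have hclosed : IsClosed (s ∩ Icc 0 t) := by
    rw [inter_comm]
    refine ContinuousOn.preimage_isClosed_of_isClosed (f := fun τ => (θ τ, r - M *ᵥ θ τ))
      (fun τ hτ => ?_) isClosed_Icc ((isClosed_le continuous_const continuous_fst).inter
        (isClosed_le continuous_const continuous_snd))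
    exact ((hθ τ hτ.1).continuousAt.prodMk
      (dln_hasDerivAt_residual (hθ τ hτ.1)).continuousAt).continuousWithinAt
  have hstep : ∀ T ∈ Ico 0 t, Icc 0 T ⊆ s → s ∈ 𝓝[>] T := by
    intro T hT hsub
    have hpos :=
      dln_pos_of_nonneg_on_Ico hA2 hθ h0 hT.1 fun τ hτ => hsub (Ico_subset_Icc_self hτ)
    have hθc := continuousAt_pi.1 (hθ T hT.1).continuousAt
    have hgc := continuousAt_pi.1 (dln_hasDerivAt_residual (hθ T hT.1)).continuousAt
    refine mem_nhdsWithin_of_mem_nhds ?_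
    filter_upwards [eventually_all.2 fun i => continuousAt_const.eventually_lt (hθc i) (hpos i).1,
      eventually_all.2 fun i => continuousAt_const.eventually_lt (hgc i) (hpos i).2]
      with τ hθτ hgτ
    exact ⟨fun i => (hθτ i).le, fun i => (hgτ i).le⟩
  exact hclosed.Icc_subset_of_forall_mem_nhdsGT_of_Icc_subset
    ⟨fun i => (h0 i).1.le, fun i => (h0 i).2.le⟩ hstep ⟨ht, le_rfl⟩

theorem dln_monotoneOn (hA2 : ∀ i j, i ≠ j → M i j ≤ 0)
    (hθ : ∀ t ≥ 0, HasDerivAt θ (θ t * (r - M *ᵥ θ t)) t)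
    (h0 : ∀ i, 0 < θ 0 i ∧ 0 < (r - M *ᵥ θ 0) i)
    (i : Fin d) : MonotoneOn (θ · i) (Ici 0) := by
  refine monotoneOn_of_hasDerivAt_nonneg (convex_Ici 0)
    (fun t ht => hasDerivAt_pi.1 (hθ t ht) i) fun t ht => ?_
  rw [interior_Ici] at ht
  obtain ⟨hθt, hgt⟩ := dln_nonneg hA2 hθ h0 (le_of_lt ht)
  exact mul_nonneg (hθt i) (hgt i)

end DLN

theorem exists_residual_pos_of_rpow {d : ℕ} (M : Matrix (Fin d) (Fin d) ℝ) {r : Fin d → ℝ}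
    (hr : ∀ i, 0 < r i) (C : Fin d → ℝ) {k : Fin d → ℝ} (hk : ∀ i, 0 < k i) :
    ∃ ε₀ > 0, ∀ ε ∈ Ioc 0 ε₀, ∀ i, 0 < (r - M *ᵥ fun j => C j * ε ^ k j) i := by
  have hcont : Continuous fun ε : ℝ => r - M *ᵥ fun j => C j * ε ^ k j :=
    continuous_const.sub (continuous_const.matrix_mulVec
      (continuous_pi fun j => continuous_const.mul (continuous_rpow_const (hk j).le)))
  have hlim : Tendsto (fun ε : ℝ => r - M *ᵥ fun j => C j * ε ^ k j) (𝓝 0) (𝓝 r) := by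
    have h0 : (fun j => C j * (0 : ℝ) ^ k j) = 0 := funext fun j => by simp [zero_rpow (hk j).ne']
    simpa [h0] using hcont.tendsto 0
  have hev : ∀ᶠ ε in 𝓝[>] 0, ∀ i, 0 < (r - M *ᵥ fun j => C j * ε ^ k j) i :=
    nhdsWithin_le_nhds <| eventually_all.2 fun i =>
      (tendsto_pi_nhds.1 hlim i).eventually_const_lt (hr i)
  exact mem_nhdsGT_iff_exists_Ioc_subset.1 hev

theorem dln_nondecreasing_general (d : ℕ)
    (M : Matrix (Fin d) (Fin d) ℝ) (r : Fin d → ℝ)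
    (hA1 : ∀ i, 0 < r i)
    (hA2 : ∀ i j, i ≠ j → M i j ≤ 0)
    (C k : Fin d → ℝ) (hC : ∀ i, 0 < C i) (hk : ∀ i, 0 < k i) :
    ∃ ε₀ > (0 : ℝ), ∀ ε ∈ Set.Ioc (0 : ℝ) ε₀, ∀ θ : ℝ → Fin d → ℝ,
      (∀ i, θ 0 i = C i * ε ^ k i) →
      (∀ t ≥ (0 : ℝ), ∀ i,
        HasDerivAt (fun τ => θ τ i) (θ t i * (r i - (M *ᵥ θ t) i)) t) →
      ∀ i, MonotoneOn (fun t => θ t i) (Set.Ici 0) := by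
  obtain ⟨ε₀, hε₀, hsmall⟩ := exists_residual_pos_of_rpow M hA1 C hk
  refine ⟨ε₀, hε₀, fun ε hε θ hθ0 hθ => ?_⟩
  have hinit : θ 0 = fun j => C j * ε ^ k j := funext hθ0
  refine dln_monotoneOn hA2 (fun t ht => hasDerivAt_pi.2 (hθ t ht)) fun j => ⟨?_, ?_⟩
  · rw [hθ0]
    exact mul_pos (hC j) (rpow_pos_of_pos hε.1 _)
  · rw [hinit]
    exact hsmall ε hε j

/-- Lemma 1: Under (A1) and (A2), there exists `ε₀ > 0` such that for all
`ε ∈ (0, ε₀]`, every solution of the DLN ODE starting from `θᵢ(0) = Cᵢ ε^{kᵢ}` has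
nondecreasing coordinates on `[0, ∞)`. -/
theorem dln_nondecreasing (n d : ℕ) (hn : 0 < n) (hd : 0 < d)
    (X : Matrix (Fin n) (Fin d) ℝ) (y : Fin n → ℝ)
    (M : Matrix (Fin d) (Fin d) ℝ) (r : Fin d → ℝ)
    (hM : M = Xᵀ * X) (hr : r = Xᵀ *ᵥ y)
    (hA1 : ∀ i, 0 < r i)
    (hA2 : ∀ i j, i ≠ j → M i j ≤ 0)
    (C k : Fin d → ℝ) (hC : ∀ i, 0 < C i) (hk : ∀ i, 0 < k i) :
    ∃ ε₀ > (0 : ℝ), ∀ ε ∈ Set.Ioc (0 : ℝ) ε₀, ∀ θ : ℝ → Fin d → ℝ,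
      (∀ i, θ 0 i = C i * ε ^ k i) →
      (∀ t ≥ (0 : ℝ), ∀ i,
        HasDerivAt (fun τ => θ τ i) (θ t i * (r i - (M *ᵥ θ t) i)) t) →
      ∀ i, MonotoneOn (fun t => θ t i) (Set.Ici 0) :=
  dln_nondecreasing_general d M r hA1 hA2 C k hC hk
end

section
/- Assume (A2) M_{ij} ≤ 0 for all i ≠ j, where M = XᵀX and r = Xᵀy. Define Q = {θ ∈ ℝ^d : θ ≥ 0 and r_i − (Mθ)_i ≥ 0 for all i}. Then Q is positively invariant for the DLN ODE: if θ : [0,∞) → ℝ^d is differentiable, satisfies dθ_i/dt = θ_i (r_i − (Mθ)_i) for all t ≥ 0 and all i, and θ(0) ∈ Q, then θ(t) ∈ Q for all t ≥ 0. -/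
open Matrix Set Filter Topology

/-!
Both `θ` and the residual `g = r - Mθ` solve linear systems `v' = B(t) v` with a Metzler
coefficient matrix: `θ' = diag(g) θ`, and `g' = -M diag(θ) g`, whose off-diagonal entries
`-Mᵢⱼ θⱼ` are nonnegative by (A2) once `θ ≥ 0` is known. Such a system keeps the nonnegative
orthant invariant: after adding `ε e^{L(t-T)}` to every coordinate, with `L` above the row sums
of `B` on `[0, T]`, the vector field points strictly inward wherever the perturbed solution
meets the boundary of the orthant, so it never does; then let `ε → 0`.
-/

def Matrix.IsMetzler {ι R : Type*} [Zero R] [LE R] (A : Matrix ι ι R) : Prop :=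
  ∀ i j, i ≠ j → 0 ≤ A i j

theorem Matrix.IsMetzler.mulVec_apply_nonneg {ι R : Type*} [Fintype ι] [Semiring R]
    [PartialOrder R] [IsOrderedRing R] {A : Matrix ι ι R} (hA : A.IsMetzler) {u : ι → R}
    (hu : 0 ≤ u) {i : ι} (hi : u i = 0) : 0 ≤ (A *ᵥ u) i := by
  refine Finset.sum_nonneg fun j _ => ?_
  rcases eq_or_ne i j with rfl | hij
  · simp [hi]
  · exact mul_nonneg (hA i j hij) (hu j)

theorem HasDerivAt.eventually_nhdsLT_lt {f : ℝ → ℝ} {f' x : ℝ} (hf : HasDerivAt f f' x)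
    (hf' : 0 < f') : ∀ᶠ s in 𝓝[<] x, f s < f x := by
  have hslope := (hasDerivAt_iff_tendsto_slope.mp hf).eventually (eventually_gt_nhds hf')
  filter_upwards [nhdsLT_le_nhdsNE x hslope, self_mem_nhdsWithin] with s hs hsx
  rw [slope_def_field] at hs
  by_contra! hle
  exact hs.not_ge (div_nonpos_of_nonneg_of_nonpos (sub_nonneg.mpr hle) (sub_nonpos.mpr hsx.le))

theorem forall_pos_of_deriv_pos_on_boundary {ι : Type*} [Finite ι] {w w' : ℝ → ι → ℝ} {T : ℝ}
    (hw : ∀ t ∈ Icc 0 T, ∀ i, HasDerivAt (fun s => w s i) (w' t i) t)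
    (h0 : ∀ i, 0 < w 0 i)
    (hbd : ∀ t ∈ Icc 0 T, 0 ≤ w t → ∀ i, w t i = 0 → 0 < w' t i) :
    ∀ t ∈ Icc 0 T, ∀ i, 0 < w t i := by
  by_contra! hneg
  set S := {t ∈ Icc 0 T | ∃ i, w t i ≤ 0}
  have hS : IsClosed S := by
    have : S = ⋃ i, Icc 0 T ∩ (fun t => w t i) ⁻¹' Iic 0 := by ext; simp [S]
    rw [this]
    exact isClosed_iUnion_of_finite fun i => ContinuousOn.preimage_isClosed_of_isClosed
      (fun t ht => (hw t ht i).continuousAt.continuousWithinAt) isClosed_Icc isClosed_Iic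
  obtain ⟨τ, ⟨hτ, i, hi⟩, hleast⟩ :=
    (isCompact_Icc.of_isClosed_subset hS fun t ht => ht.1).exists_isLeast hneg
  have hτ0 : 0 < τ := hτ.1.lt_of_ne (by rintro rfl; exact (h0 i).not_ge hi)
  have hbefore : ∀ᶠ s in 𝓝[<] τ, ∀ j, 0 < w s j := by
    filter_upwards [Ioo_mem_nhdsLT hτ0] with s hs
    by_contra! ⟨j, hj⟩
    exact (hleast ⟨⟨hs.1.le, hs.2.le.trans hτ.2⟩, j, hj⟩).not_gt hs.2
  have hτnn : 0 ≤ w τ := fun j =>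
    ge_of_tendsto ((hw τ hτ j).continuousAt.tendsto.mono_left nhdsWithin_le_nhds)
      (hbefore.mono fun s hs => (hs j).le)
  have hi0 : w τ i = 0 := le_antisymm hi (hτnn i)
  obtain ⟨s, hs_pos, hs_lt⟩ :=
    (hbefore.and ((hw τ hτ i).eventually_nhdsLT_lt (hbd τ hτ hτnn i hi0))).exists
  linarith [hs_pos i]

theorem nonneg_of_hasDerivAt_mulVec_of_isMetzler {ι : Type*} [Fintype ι]
    {B : ℝ → Matrix ι ι ℝ} {v : ℝ → ι → ℝ} (hB : ContinuousOn B (Ici 0))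
    (hBM : ∀ t ≥ 0, (B t).IsMetzler)
    (hv : ∀ t ≥ 0, ∀ i, HasDerivAt (fun s => v s i) ((B t *ᵥ v t) i) t)
    (h0 : 0 ≤ v 0) : ∀ t ≥ 0, 0 ≤ v t := by
  intro T hT i
  change 0 ≤ v T i
  obtain ⟨C, hC⟩ := isCompact_Icc.exists_bound_of_continuousOn
    ((continuous_id.matrix_mulVec continuous_const).comp_continuousOn
      (hB.mono Icc_subset_Ici_self) : ContinuousOn (fun t => B t *ᵥ 1) (Icc 0 T))
  have hrow : ∀ t ∈ Icc 0 T, ∀ j, (B t *ᵥ 1) j ≤ C := fun t ht j =>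
    (le_abs_self _).trans ((norm_le_pi_norm _ j).trans (hC t ht))
  refine le_of_forall_pos_lt_add fun ε hε => ?_
  set L := C + 1
  set e : ℝ → ℝ := fun s => ε * Real.exp (L * (s - T))
  have he_pos : ∀ s, 0 < e s := fun s => by positivity
  have he : ∀ s, HasDerivAt e (L * e s) s := fun s => by
    refine ((((hasDerivAt_id s).sub_const T).const_mul L).exp.const_mul ε).congr_deriv ?_
    simp only [e, id, mul_one]
    ring
  have key := forall_pos_of_deriv_pos_on_boundary (T := T) (w := fun s j => v s j + e s)
    (w' := fun s j => (B s *ᵥ v s) j + L * e s)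
    (fun t ht j => (hv t ht.1 j).add (he t))
    (fun j => add_pos_of_nonneg_of_pos (h0 j) (he_pos 0)) ?_ T ⟨hT, le_rfl⟩ i
  · simpa [e] using key
  intro t ht hw j hj
  have hv_eq : v t = (fun j => v t j + e t) - e t • 1 := by ext; simp
  have hBw := (hBM t ht.1).mulVec_apply_nonneg hw hj
  -- `(B v)ⱼ = (B w)ⱼ - e (B 1)ⱼ ≥ -C e`, which the drift `L e = (C + 1) e` beats
  rw [hv_eq, mulVec_sub, mulVec_smul, Pi.sub_apply, Pi.smul_apply, smul_eq_mul]
  nlinarith [hrow t ht j, he_pos t]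

theorem hasDerivAt_mulVec_apply {ι κ : Type*} [Fintype κ] (M : Matrix ι κ ℝ)
    {v : ℝ → κ → ℝ} {v' : κ → ℝ} {t : ℝ} (hv : ∀ j, HasDerivAt (fun s => v s j) (v' j) t)
    (i : ι) : HasDerivAt (fun s => (M *ᵥ v s) i) ((M *ᵥ v') i) t := by
  simpa only [mulVec, dotProduct] using HasDerivAt.fun_sum fun j _ => (hv j).const_mul (M i j)

theorem dln_positively_invariant_general (d : ℕ)
    (M : Matrix (Fin d) (Fin d) ℝ) (r : Fin d → ℝ)
    (hA2 : ∀ i j, i ≠ j → M i j ≤ 0)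
    (θ : ℝ → Fin d → ℝ)
    (hode : ∀ t ≥ (0 : ℝ), ∀ i,
      HasDerivAt (fun τ => θ τ i) (θ t i * (r i - (M *ᵥ θ t) i)) t)
    (h0 : (∀ i, 0 ≤ θ 0 i) ∧ (∀ i, 0 ≤ r i - (M *ᵥ θ 0) i)) :
    ∀ t ≥ (0 : ℝ), (∀ i, 0 ≤ θ t i) ∧ (∀ i, 0 ≤ r i - (M *ᵥ θ t) i) := by
  have hθ_cont : ContinuousOn θ (Ici 0) := continuousOn_pi.2 fun i t ht =>
    (hode t ht i).continuousAt.continuousWithinAt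
  have hθ : ∀ t ≥ 0, 0 ≤ θ t := by
    refine nonneg_of_hasDerivAt_mulVec_of_isMetzler (B := fun t => diagonal (r - M *ᵥ θ t))
      (by fun_prop) (fun t _ i j hij => (diagonal_apply_ne _ hij).ge) (fun t ht i => ?_) h0.1
    simpa only [mulVec_diagonal, mul_comm, Pi.sub_apply] using hode t ht i
  have hres : ∀ t ≥ 0, 0 ≤ r - M *ᵥ θ t := by
    refine nonneg_of_hasDerivAt_mulVec_of_isMetzler (B := fun t => -(M * diagonal (θ t)))
      (by fun_prop) (fun t ht i j hij => ?_) (fun t ht i => ?_) h0.2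
    · simpa only [Matrix.neg_apply, mul_diagonal, neg_nonneg] using
        mul_nonpos_of_nonpos_of_nonneg (hA2 i j hij) (hθ t ht j)
    · refine ((hasDerivAt_mulVec_apply M (hode t ht) i).const_sub (r i)).congr_deriv ?_
      rw [neg_mulVec, ← mulVec_mulVec, Pi.neg_apply]
      congr 3 with j
      exact (mulVec_diagonal (θ t) (r - M *ᵥ θ t) j).symm
  exact fun t ht => ⟨hθ t ht, hres t ht⟩

/-- Under (A2), the set `Q = {θ ≥ 0 : r − Mθ ≥ 0}` is positively invariant
for the DLN ODE `dθᵢ/dt = θᵢ (rᵢ − (Mθ)ᵢ)`. -/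
theorem dln_positively_invariant (n d : ℕ) (hn : 0 < n) (hd : 0 < d)
    (X : Matrix (Fin n) (Fin d) ℝ) (y : Fin n → ℝ)
    (M : Matrix (Fin d) (Fin d) ℝ) (r : Fin d → ℝ)
    (hM : M = Xᵀ * X) (hr : r = Xᵀ *ᵥ y)
    (hA2 : ∀ i j, i ≠ j → M i j ≤ 0)
    (θ : ℝ → Fin d → ℝ)
    (hode : ∀ t ≥ (0 : ℝ), ∀ i,
      HasDerivAt (fun τ => θ τ i) (θ t i * (r i - (M *ᵥ θ t) i)) t)
    (h0 : (∀ i, 0 ≤ θ 0 i) ∧ (∀ i, 0 ≤ r i - (M *ᵥ θ 0) i)) :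
    ∀ t ≥ (0 : ℝ), (∀ i, 0 ≤ θ t i) ∧ (∀ i, 0 ≤ r i - (M *ᵥ θ t) i) :=
  dln_positively_invariant_general d M r hA2 θ hode h0
end

section
/- Assume (A1) r has all coordinates strictly positive and (A2) M_{ij} ≤ 0 for all i ≠ j, where M = XᵀX and r = Xᵀy. Then for every s > 0, the constrained optimization problem: minimize f(θ) + (1/s)⟨k, θ⟩ over {θ ∈ ℝ^d : θ ≥ 0}, has a unique minimizer μ(s). -/
open Matrix

private lemma dln_aux1 {n d : ℕ} (X : Matrix (Fin n) (Fin d) ℝ) (y : Fin n → ℝ)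
    (v : Fin d → ℝ) :
    ∑ i, (Xᵀ *ᵥ y) i * v i = ∑ j, y j * (X *ᵥ v) j := by
  have : (Xᵀ *ᵥ y) ⬝ᵥ v = y ⬝ᵥ (X *ᵥ v) := by
    rw [dotProduct_comm, Matrix.dotProduct_mulVec, Matrix.vecMul_transpose,
      dotProduct_comm]
  simpa [dotProduct] using this

private lemma dln_aux2 {n d : ℕ} (X : Matrix (Fin n) (Fin d) ℝ) (u v : Fin d → ℝ) :
    ∑ i, u i * ((Xᵀ * X) *ᵥ v) i = ∑ j, (X *ᵥ u) j * (X *ᵥ v) j := by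
  have : u ⬝ᵥ ((Xᵀ * X) *ᵥ v) = (X *ᵥ u) ⬝ᵥ (X *ᵥ v) := by
    rw [← Matrix.mulVec_mulVec, Matrix.dotProduct_mulVec, Matrix.vecMul_transpose]
  simpa [dotProduct] using this

/-- Under (A1) and (A2), for every `s > 0` the problem of minimizing
`f(θ) + (1/s)⟨k, θ⟩` over `{θ ≥ 0}` has a unique minimizer `μ(s)`, where
`f(θ) = ½‖y‖² − ⟨r, θ⟩ + ½⟨θ, Mθ⟩`. -/
theorem dln_regularized_unique_minimizer (n d : ℕ) (hn : 0 < n) (hd : 0 < d)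
    (X : Matrix (Fin n) (Fin d) ℝ) (y : Fin n → ℝ)
    (M : Matrix (Fin d) (Fin d) ℝ) (r : Fin d → ℝ)
    (hM : M = Xᵀ * X) (hr : r = Xᵀ *ᵥ y)
    (hA1 : ∀ i, 0 < r i)
    (hA2 : ∀ i j, i ≠ j → M i j ≤ 0)
    (k : Fin d → ℝ) (hk : ∀ i, 0 < k i)
    (f : (Fin d → ℝ) → ℝ)
    (hf : ∀ θ : Fin d → ℝ, f θ =
      (1 / 2) * ∑ j, (y j) ^ 2 - ∑ i, r i * θ i + (1 / 2) * ∑ i, θ i * (M *ᵥ θ) i) :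
    ∀ s > (0 : ℝ), ∃! μ : Fin d → ℝ,
      (∀ i, 0 ≤ μ i) ∧
      ∀ θ : Fin d → ℝ, (∀ i, 0 ≤ θ i) →
        f μ + (1 / s) * ∑ i, k i * μ i ≤ f θ + (1 / s) * ∑ i, k i * θ i := by
  intro s hs
  -- the objective function
  set g : (Fin d → ℝ) → ℝ := fun θ => f θ + (1 / s) * ∑ i, k i * θ i with hgdef
  -- key identity: f θ = ½‖y - Xθ‖²
  have key : ∀ θ : Fin d → ℝ, f θ = (1/2) * ∑ j, (y j - (X *ᵥ θ) j)^2 := by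
    intro θ
    rw [hf θ, hr, hM, dln_aux1, dln_aux2, Finset.mul_sum, Finset.mul_sum, Finset.mul_sum,
      ← Finset.sum_sub_distrib, ← Finset.sum_add_distrib]
    exact Finset.sum_congr rfl fun j _ => by ring
  have fnonneg : ∀ θ, 0 ≤ f θ := by
    intro θ; rw [key θ]; positivity
  -- continuity of g
  have hXc : ∀ j, Continuous fun θ : Fin d → ℝ => (X *ᵥ θ) j := by
    intro j
    simp only [Matrix.mulVec, dotProduct]
    exact continuous_finset_sum _ fun i _ => continuous_const.mul (continuous_apply i)
  have hfc : Continuous f := by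
    have h : Continuous fun θ : Fin d → ℝ => (1/2) * ∑ j, (y j - (X *ᵥ θ) j)^2 := by
      exact continuous_const.mul (continuous_finset_sum _
        fun j _ => (continuous_const.sub (hXc j)).pow 2)
    have hfeq : f = fun θ : Fin d → ℝ => (1/2) * ∑ j, (y j - (X *ᵥ θ) j)^2 := funext key
    rw [hfeq]; exact h
  have hgc : Continuous g := by
    apply hfc.add
    exact continuous_const.mul
      (continuous_finset_sum _ fun i _ => continuous_const.mul (continuous_apply i))
  -- the candidate compact sublevel set
  set K : Set (Fin d → ℝ) := {θ | (∀ i, 0 ≤ θ i) ∧ g θ ≤ g 0} with hKdef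
  have hK0 : (0 : Fin d → ℝ) ∈ K := ⟨fun i => le_refl 0, le_refl _⟩
  have hKc : IsClosed K := by
    have h1 : IsClosed {θ : Fin d → ℝ | ∀ i, 0 ≤ θ i} := by
      have : {θ : Fin d → ℝ | ∀ i, 0 ≤ θ i} = ⋂ i, {θ : Fin d → ℝ | 0 ≤ θ i} := by
        ext θ; simp
      rw [this]
      exact isClosed_iInter fun i => isClosed_le continuous_const (continuous_apply i)
    have h2 : IsClosed {θ : Fin d → ℝ | g θ ≤ g 0} := isClosed_le hgc continuous_const
    exact h1.inter h2
  have hg0 : 0 ≤ g 0 := by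
    rw [hgdef]
    simp only [Pi.zero_apply, mul_zero, Finset.sum_const_zero]
    simpa using fnonneg 0
  have hKsub : K ⊆ Set.pi Set.univ fun i => Set.Icc 0 (s * g 0 / k i) := by
    rintro θ ⟨hθ, hgθ⟩ i _
    refine ⟨hθ i, ?_⟩
    have h1 : k i * θ i ≤ ∑ l, k l * θ l :=
      Finset.single_le_sum (fun l _ => mul_nonneg (hk l).le (hθ l)) (Finset.mem_univ i)
    have h2 : (1/s) * ∑ l, k l * θ l ≤ g θ := by
      rw [hgdef]; simp only []; linarith [fnonneg θ]
    have h3 : (1/s) * (k i * θ i) ≤ g 0 := by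
      calc (1/s) * (k i * θ i) ≤ (1/s) * ∑ l, k l * θ l :=
            mul_le_mul_of_nonneg_left h1 (le_of_lt (by positivity : (0:ℝ) < 1/s))
        _ ≤ g θ := h2
        _ ≤ g 0 := hgθ
    rw [le_div_iff₀ (hk i)]
    calc θ i * k i = s * ((1/s) * (k i * θ i)) := by field_simp
      _ ≤ s * g 0 := by apply mul_le_mul_of_nonneg_left h3 hs.le
  have hKcompact : IsCompact K :=
    IsCompact.of_isClosed_subset (isCompact_univ_pi fun i => isCompact_Icc) hKc hKsub
  obtain ⟨μ, hμK, hμmin⟩ := hKcompact.exists_isMinOn ⟨0, hK0⟩ hgc.continuousOn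
  -- μ minimizes g over all of {θ ≥ 0}
  have global : ∀ θ : Fin d → ℝ, (∀ i, 0 ≤ θ i) → g μ ≤ g θ := by
    intro θ hθ
    by_cases h : g θ ≤ g 0
    · exact (isMinOn_iff.mp hμmin) θ ⟨hθ, h⟩
    · exact le_trans ((isMinOn_iff.mp hμmin) 0 hK0) (le_of_not_ge h)
  refine ⟨μ, ⟨hμK.1, fun θ hθ => global θ hθ⟩, ?_⟩
  -- uniqueness
  rintro ν ⟨hν0, hνmin⟩
  have hgνμ : g ν = g μ := le_antisymm (hνmin μ hμK.1) (global ν hν0)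
  set m : Fin d → ℝ := fun i => (ν i + μ i) / 2 with hmdef
  have hm0 : ∀ i, 0 ≤ m i := fun i => by
    have := hν0 i; have := hμK.1 i; rw [hmdef]; dsimp only; linarith
  have hgm : g μ ≤ g m := global m hm0
  have hXm : ∀ j, (X *ᵥ m) j = ((X *ᵥ ν) j + (X *ᵥ μ) j) / 2 := by
    intro j
    simp only [Matrix.mulVec, dotProduct, hmdef]
    rw [← Finset.sum_add_distrib, Finset.sum_div]
    exact Finset.sum_congr rfl fun i _ => by ring
  have e1 : ∑ i, k i * m i = (∑ i, k i * ν i + ∑ i, k i * μ i) / 2 := by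
    rw [← Finset.sum_add_distrib, Finset.sum_div]
    exact Finset.sum_congr rfl fun i _ => by rw [hmdef]; ring
  have e2 : f ν + f μ - 2 * f m = (1/4) * ∑ j, ((X *ᵥ ν) j - (X *ᵥ μ) j)^2 := by
    rw [key ν, key μ, key m, Finset.mul_sum, Finset.mul_sum, Finset.mul_sum, Finset.mul_sum,
      Finset.mul_sum, ← Finset.sum_add_distrib, ← Finset.sum_sub_distrib]
    exact Finset.sum_congr rfl fun j _ => by rw [hXm j]; ring
  have hquad : g ν + g μ - 2 * g m = (1/4) * ∑ j, ((X *ᵥ ν) j - (X *ᵥ μ) j)^2 := by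
    rw [hgdef]; dsimp only
    rw [e1] at *
    linarith [e2, e1]
  have hsum0 : ∑ j, ((X *ᵥ ν) j - (X *ᵥ μ) j)^2 = 0 := by
    have hle : (1/4) * ∑ j, ((X *ᵥ ν) j - (X *ᵥ μ) j)^2 ≤ 0 := by
      rw [← hquad]; linarith [hgm, hgνμ]
    have hge : 0 ≤ ∑ j, ((X *ᵥ ν) j - (X *ᵥ μ) j)^2 := by positivity
    linarith
  have hXeq : ∀ j, (X *ᵥ ν) j = (X *ᵥ μ) j := by
    intro j
    have h := (Finset.sum_eq_zero_iff_of_nonneg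
      (fun j _ => by positivity)).mp hsum0 j (Finset.mem_univ j)
    have h2 := sq_eq_zero_iff.mp h
    linarith
  -- positive and negative parts of ν - μ
  set p : Fin d → ℝ := fun i => max (ν i - μ i) 0 with hpdef
  set q : Fin d → ℝ := fun i => max (μ i - ν i) 0 with hqdef
  have hp : ∀ i, 0 ≤ p i := fun i => le_max_right _ 0
  have hq : ∀ i, 0 ≤ q i := fun i => le_max_right _ 0
  have hpq : ∀ i, ν i - μ i = p i - q i := by
    intro i
    rw [hpdef, hqdef]; dsimp only
    rcases le_total (ν i) (μ i) with h | h
    · rw [max_eq_right (by linarith), max_eq_left (by linarith)]; ring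
    · rw [max_eq_left (by linarith), max_eq_right (by linarith)]; ring
  have hpq0 : ∀ i, p i * q i = 0 := by
    intro i
    rw [hpdef, hqdef]; dsimp only
    rcases le_total (ν i) (μ i) with h | h
    · rw [max_eq_right (by linarith : ν i - μ i ≤ 0)]; ring
    · rw [max_eq_right (by linarith : μ i - ν i ≤ 0)]; ring
  have hXpq : ∀ j, (X *ᵥ p) j = (X *ᵥ q) j := by
    intro j
    have h1 : (X *ᵥ p) j - (X *ᵥ q) j = (X *ᵥ ν) j - (X *ᵥ μ) j := by
      simp only [Matrix.mulVec, dotProduct]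
      rw [← Finset.sum_sub_distrib, ← Finset.sum_sub_distrib]
      exact Finset.sum_congr rfl fun i _ => by rw [← mul_sub, ← mul_sub, ← hpq i]
    have := hXeq j
    linarith
  -- ⟨p, Mq⟩ ≤ 0 by (A2)
  have hMq : ∑ i, p i * (M *ᵥ q) i ≤ 0 := by
    simp only [Matrix.mulVec, dotProduct, Finset.mul_sum]
    apply Finset.sum_nonpos
    intro i _
    apply Finset.sum_nonpos
    intro l _
    by_cases hil : i = l
    · subst hil
      have : p i * (M i i * q i) = M i i * (p i * q i) := by ring
      rw [this, hpq0 i, mul_zero]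
    · have h1 := hA2 i l hil
      have h2 := hp i
      have h3 := hq l
      exact mul_nonpos_iff.mpr (Or.inl ⟨h2, mul_nonpos_iff.mpr (Or.inr ⟨h1, h3⟩)⟩)
  -- but ⟨p, Mq⟩ = ‖Xq‖²
  have hMq2 : ∑ i, p i * (M *ᵥ q) i = ∑ j, ((X *ᵥ q) j)^2 := by
    rw [hM, dln_aux2]
    exact Finset.sum_congr rfl fun j _ => by rw [hXpq j]; ring
  have hXq0 : ∀ j, (X *ᵥ q) j = 0 := by
    intro j
    have hge : 0 ≤ ∑ j, ((X *ᵥ q) j)^2 := by positivity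
    have hsum : ∑ j, ((X *ᵥ q) j)^2 = 0 := le_antisymm (hMq2 ▸ hMq) hge
    have := (Finset.sum_eq_zero_iff_of_nonneg
      (fun j _ => by positivity)).mp hsum j (Finset.mem_univ j)
    nlinarith [sq_nonneg ((X *ᵥ q) j)]
  have hXp0 : ∀ j, (X *ᵥ p) j = 0 := fun j => by rw [hXpq j, hXq0 j]
  -- ⟨r, q⟩ = 0 and ⟨r, p⟩ = 0 force p = q = 0
  have hrq : ∑ i, r i * q i = 0 := by
    rw [hr, dln_aux1]
    exact Finset.sum_eq_zero fun j _ => by rw [hXq0 j, mul_zero]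
  have hrp : ∑ i, r i * p i = 0 := by
    rw [hr, dln_aux1]
    exact Finset.sum_eq_zero fun j _ => by rw [hXp0 j, mul_zero]
  have hq0 : ∀ i, q i = 0 := by
    intro i
    have := (Finset.sum_eq_zero_iff_of_nonneg
      (fun i _ => mul_nonneg (hA1 i).le (hq i))).mp hrq i (Finset.mem_univ i)
    have hri := hA1 i
    rcases mul_eq_zero.mp this with h | h
    · exact absurd h (ne_of_gt hri)
    · exact h
  have hp0 : ∀ i, p i = 0 := by
    intro i
    have := (Finset.sum_eq_zero_iff_of_nonneg
      (fun i _ => mul_nonneg (hA1 i).le (hp i))).mp hrp i (Finset.mem_univ i)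
    have hri := hA1 i
    rcases mul_eq_zero.mp this with h | h
    · exact absurd h (ne_of_gt hri)
    · exact h
  funext i
  have := hpq i
  rw [hp0 i, hq0 i] at this
  linarith
end

section
/- Assume (A1) r has all coordinates strictly positive and (A2) M_{ij} ≤ 0 for all i ≠ j, where M = XᵀX and r = Xᵀy. For s > 0, let μ(s) be the unique minimizer over {θ ≥ 0} of f(θ) + (1/s)⟨k, θ⟩, and let I(s) = {i : μ_i(s) > 0}. Then μ is nondecreasing in s: for all 0 < s₁ ≤ s₂ and all i ∈ {1,…,d}, μ_i(s₁) ≤ μ_i(s₂); consequently the map s ↦ I(s) is nondecreasing for inclusion. -/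
open Matrix

set_option maxHeartbeats 1600000

private lemma minmax_quad (p q u v : ℝ) :
    p * u + q * v ≤ min p q * min u v + max p q * max u v := by
  simp only [min_def, max_def]
  split_ifs <;> nlinarith

/-- Theorem 1, point 1: Under (A1) and (A2), the unique minimizer `μ(s)`
of `f(θ) + (1/s)⟨k, θ⟩` over `{θ ≥ 0}` is nondecreasing in `s` coordinatewise;
consequently the support `I(s) = {i : μᵢ(s) > 0}` is nondecreasing for inclusion. -/
theorem dln_minimizer_nondecreasing (n d : ℕ) (hn : 0 < n) (hd : 0 < d)
    (X : Matrix (Fin n) (Fin d) ℝ) (y : Fin n → ℝ)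
    (M : Matrix (Fin d) (Fin d) ℝ) (r : Fin d → ℝ)
    (hM : M = Xᵀ * X) (hr : r = Xᵀ *ᵥ y)
    (hA1 : ∀ i, 0 < r i)
    (hA2 : ∀ i j, i ≠ j → M i j ≤ 0)
    (k : Fin d → ℝ) (hk : ∀ i, 0 < k i)
    (f : (Fin d → ℝ) → ℝ)
    (hf : ∀ θ : Fin d → ℝ, f θ =
      (1 / 2) * ∑ j, (y j) ^ 2 - ∑ i, r i * θ i + (1 / 2) * ∑ i, θ i * (M *ᵥ θ) i)
    (μ : ℝ → Fin d → ℝ)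
    (hμ : ∀ s > (0 : ℝ),
      (∀ i, 0 ≤ μ s i) ∧
      ∀ θ : Fin d → ℝ, (∀ i, 0 ≤ θ i) →
        f (μ s) + (1 / s) * ∑ i, k i * μ s i ≤ f θ + (1 / s) * ∑ i, k i * θ i) :
    ∀ s₁ s₂ : ℝ, 0 < s₁ → s₁ ≤ s₂ →
      (∀ i, μ s₁ i ≤ μ s₂ i) ∧
      {i : Fin d | 0 < μ s₁ i} ⊆ {i : Fin d | 0 < μ s₂ i} := by
  intro s₁ s₂ hs₁ hle
  have hs₂ : (0:ℝ) < s₂ := lt_of_lt_of_le hs₁ hle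
  rcases eq_or_lt_of_le hle with heq | hlt
  · subst heq
    exact ⟨fun i => le_refl _, fun i hi => hi⟩
  have key : ∀ i, μ s₁ i ≤ μ s₂ i := by
    set a : Fin d → ℝ := μ s₁ with ha
    set b : Fin d → ℝ := μ s₂ with hb
    set c : Fin d → ℝ := fun i => min (a i) (b i) with hc
    set e : Fin d → ℝ := fun i => max (a i) (b i) with he
    obtain ⟨ha0, hopt1⟩ := hμ s₁ hs₁
    obtain ⟨hb0, hopt2⟩ := hμ s₂ hs₂
    have hc0 : ∀ i, 0 ≤ c i := fun i => le_min (ha0 i) (hb0 i)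
    have he0 : ∀ i, 0 ≤ e i := fun i => le_trans (ha0 i) (le_max_left _ _)
    have h1 := hopt1 c hc0
    have h2 := hopt2 e he0
    rw [hf a, hf c] at h1
    rw [hf b, hf e] at h2
    -- expand quadratic forms
    have expand : ∀ θ : Fin d → ℝ,
        ∑ i, θ i * (M *ᵥ θ) i = ∑ i, ∑ j, M i j * (θ i * θ j) := by
      intro θ
      apply Finset.sum_congr rfl
      intro i _
      simp only [mulVec, dotProduct]
      rw [Finset.mul_sum]
      apply Finset.sum_congr rfl
      intro j _
      ring
    -- key quadratic inequality (submodularity)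
    have hquad : ∑ i, c i * (M *ᵥ c) i + ∑ i, e i * (M *ᵥ e) i
        ≤ ∑ i, a i * (M *ᵥ a) i + ∑ i, b i * (M *ᵥ b) i := by
      rw [expand a, expand b, expand c, expand e,
        ← Finset.sum_add_distrib, ← Finset.sum_add_distrib]
      apply Finset.sum_le_sum
      intro i _
      rw [← Finset.sum_add_distrib, ← Finset.sum_add_distrib]
      apply Finset.sum_le_sum
      intro j _
      rcases eq_or_ne i j with rfl | hij
      · have hcc : c i * c i + e i * e i = a i * a i + b i * b i := by
          simp only [hc, he, min_def, max_def]
          split_ifs <;> ring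
        exact le_of_eq (by linear_combination M i i * hcc)
      · have hM0 : M i j ≤ 0 := hA2 i j hij
        have hmm : a i * a j + b i * b j ≤ c i * c j + e i * e j := by
          simpa only [hc, he] using minmax_quad (a i) (b i) (a j) (b j)
        nlinarith [mul_le_mul_of_nonpos_left hmm hM0]
    -- linear parts add up
    have hR : ∑ i, r i * c i + ∑ i, r i * e i
        = ∑ i, r i * a i + ∑ i, r i * b i := by
      rw [← Finset.sum_add_distrib, ← Finset.sum_add_distrib]
      apply Finset.sum_congr rfl
      intro i _
      simp only [hc, he]
      linear_combination r i * min_add_max (a i) (b i)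
    have hK : ∑ i, k i * c i + ∑ i, k i * e i
        = ∑ i, k i * a i + ∑ i, k i * b i := by
      rw [← Finset.sum_add_distrib, ← Finset.sum_add_distrib]
      apply Finset.sum_congr rfl
      intro i _
      simp only [hc, he]
      linear_combination k i * min_add_max (a i) (b i)
    -- combine
    have hlam : 1 / s₂ < 1 / s₁ := one_div_lt_one_div_of_lt hs₁ hlt
    have hKge : ∑ i, k i * c i ≤ ∑ i, k i * a i := by
      apply Finset.sum_le_sum
      intro i _
      exact mul_le_mul_of_nonneg_left (min_le_left _ _) (hk i).le
    have hμ1 : ∑ i, k i * μ s₁ i = ∑ i, k i * a i := rfl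
    have hμ2 : ∑ i, k i * μ s₂ i = ∑ i, k i * b i := rfl
    rw [hμ1] at h1
    rw [hμ2] at h2
    have hK2 : 1 / s₂ * (∑ i, k i * c i) + 1 / s₂ * (∑ i, k i * e i)
        = 1 / s₂ * (∑ i, k i * a i) + 1 / s₂ * (∑ i, k i * b i) := by
      linear_combination (1 / s₂) * hK
    have hprod : (1 / s₁ - 1 / s₂) * (∑ i, k i * a i - ∑ i, k i * c i) ≤ 0 := by
      nlinarith [h1, h2, hquad, hR, hK2]
    have hKac : ∑ i, k i * a i = ∑ i, k i * c i := by
      by_contra hcon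
      have hpos : 0 < ∑ i, k i * a i - ∑ i, k i * c i :=
        lt_of_le_of_ne (by linarith) (fun h => hcon (by linarith))
      have := mul_pos (by linarith : (0:ℝ) < 1 / s₁ - 1 / s₂) hpos
      linarith
    have hzero : ∑ i, (k i * a i - k i * c i) = 0 := by
      rw [Finset.sum_sub_distrib]
      linarith
    have hnn : ∀ i ∈ (Finset.univ : Finset (Fin d)), 0 ≤ k i * a i - k i * c i := by
      intro i _
      have h' : c i ≤ a i := min_le_left _ _
      have := mul_le_mul_of_nonneg_left h' (hk i).le
      linarith
    have hterm := (Finset.sum_eq_zero_iff_of_nonneg hnn).mp hzero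
    intro i
    have h0 := hterm i (Finset.mem_univ i)
    have hac : a i = c i := by
      have h' : k i * (a i - c i) = 0 := by linarith [h0, (by ring : k i * (a i - c i) = k i * a i - k i * c i)]
      have := (mul_eq_zero.mp h').resolve_left (ne_of_gt (hk i))
      linarith
    have : c i ≤ b i := min_le_right _ _
    linarith [hac ▸ this]
  exact ⟨key, fun i hi => lt_of_lt_of_le hi (key i)⟩
end

section
/- Assume (A1) r has all coordinates strictly positive and (A2) M_{ij} ≤ 0 for all i ≠ j, where M = XᵀX and r = Xᵀy. For s > 0, let μ(s) be the unique minimizer over {θ ≥ 0} of f(θ) + (1/s)⟨k, θ⟩. Then for every s > 0, the time average (1/(s · log(1/ε))) ∫₀^{s · log(1/ε)} θ^{(ε)}(t) dt converges to μ(s) as ε → 0, and the convergence is uniform for s in compact subsets of (0,∞). -/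
/-!
Write `F_c(θ) = ½‖y - Xθ‖² + c⟨k, θ⟩` and let `ρ` be the average of `θ^{(ε)}` over `[0, T]` with
`T = s log(1/ε)`. Integrating `d/dt log θᵢ = rᵢ - (Mθ)ᵢ` over `[0, T]` gives
`∇F_{1/s}(ρ)ᵢ = (log Cᵢ - log θᵢ(T)) / T`: the penalty cancels the initial scale `ε^{kᵢ}`.

For small `ε` the log-velocity `r - Mθ` is positive at time `0`; it solves a linear system whose
matrix `-M diag(θ)` has nonnegative off-diagonal entries by (A2), so it stays positive. Hence every
`θᵢ` increases (so `ρᵢ ≤ θᵢ(T)`), and `Mθ ≤ r` keeps `θ(t)` in the sublevel set `{F_0 ≤ F_0(0)}` of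
the orthant, which is bounded by (A1). Convexity of `F_{1/s}` then gives
`F_{1/s}(ρ) ≤ F_{1/s}(μ(s)) + O(1 / log(1/ε))`, uniformly for `s` bounded away from `0`.

The minimiser of `F_c` on the orthant is unique: two minimisers have the same image under `X`, and
then by (A2) `X` kills the positive and the negative part of their difference, which vanish by
(A1). A compactness argument turns near-optimality into uniform convergence.
-/

open Matrix Set Filter Topology Real

section LeastSquares

variable {m n : Type*} [Fintype m] [Fintype n] (X : Matrix m n ℝ) (y : m → ℝ)

noncomputable def sqLoss (θ : n → ℝ) : ℝ := (1 / 2) * ((y - X *ᵥ θ) ⬝ᵥ (y - X *ᵥ θ))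

noncomputable def regLoss (k : n → ℝ) (c : ℝ) (θ : n → ℝ) : ℝ := sqLoss X y θ + c * (k ⬝ᵥ θ)

lemma dotProduct_self_nonneg (v : m → ℝ) : 0 ≤ v ⬝ᵥ v := by
  simpa using dotProduct_star_self_nonneg v

lemma transpose_mulVec_dotProduct (v : n → ℝ) : (Xᵀ *ᵥ y) ⬝ᵥ v = y ⬝ᵥ (X *ᵥ v) := by
  rw [dotProduct_comm, dotProduct_mulVec, vecMul_transpose, dotProduct_comm]

lemma dotProduct_transpose_mul_self_mulVec (v w : n → ℝ) :
    v ⬝ᵥ ((Xᵀ * X) *ᵥ w) = (X *ᵥ v) ⬝ᵥ (X *ᵥ w) := by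
  rw [← mulVec_mulVec, dotProduct_comm, transpose_mulVec_dotProduct, dotProduct_comm]

lemma sqLoss_eq (θ : n → ℝ) :
    sqLoss X y θ = (1 / 2) * (y ⬝ᵥ y) - (Xᵀ *ᵥ y) ⬝ᵥ θ + (1 / 2) * (θ ⬝ᵥ ((Xᵀ * X) *ᵥ θ)) := by
  rw [sqLoss, transpose_mulVec_dotProduct, dotProduct_transpose_mul_self_mulVec]
  simp only [dotProduct_sub, sub_dotProduct, dotProduct_comm (X *ᵥ θ) y]
  ring

lemma sqLoss_sub_sqLoss (u w : n → ℝ) :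
    sqLoss X y u - sqLoss X y w = ((Xᵀ * X) *ᵥ w - Xᵀ *ᵥ y) ⬝ᵥ (u - w)
      + (1 / 2) * ((X *ᵥ (u - w)) ⬝ᵥ (X *ᵥ (u - w))) := by
  rw [sub_dotProduct, dotProduct_comm, dotProduct_transpose_mul_self_mulVec,
    transpose_mulVec_dotProduct, sqLoss, sqLoss, mulVec_sub]
  simp only [dotProduct_sub, sub_dotProduct, dotProduct_comm (X *ᵥ u) (X *ᵥ w),
    dotProduct_comm (X *ᵥ u) y, dotProduct_comm (X *ᵥ w) y]
  ring

lemma regLoss_sub_regLoss (k : n → ℝ) (c : ℝ) (u w : n → ℝ) :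
    regLoss X y k c u - regLoss X y k c w = ((Xᵀ * X) *ᵥ w - Xᵀ *ᵥ y + c • k) ⬝ᵥ (u - w)
      + (1 / 2) * ((X *ᵥ (u - w)) ⬝ᵥ (X *ᵥ (u - w))) := by
  have := sqLoss_sub_sqLoss X y u w
  simp only [regLoss, add_dotProduct, smul_dotProduct, dotProduct_sub, smul_eq_mul] at *
  linarith

lemma eq_zero_of_mulVec_eq_zero (hr : ∀ i, 0 < (Xᵀ *ᵥ y) i) {v : n → ℝ} (hv : 0 ≤ v)
    (hXv : X *ᵥ v = 0) : v = 0 := by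
  have hrv : ∑ i, (Xᵀ *ᵥ y) i * v i = 0 := by
    rw [← dotProduct, transpose_mulVec_dotProduct, hXv, dotProduct_zero]
  ext i
  have := (Finset.sum_eq_zero_iff_of_nonneg fun j _ => mul_nonneg (hr j).le (hv j)).1 hrv i
    (Finset.mem_univ i)
  simpa [(hr i).ne'] using this

lemma exists_pos_mul_sum_sq_le (hr : ∀ i, 0 < (Xᵀ *ᵥ y) i) :
    ∃ a > 0, ∀ v : n → ℝ, 0 ≤ v → a * (∑ i, v i) ^ 2 ≤ (X *ᵥ v) ⬝ᵥ (X *ᵥ v) := by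
  have hpos : ∀ v ∈ stdSimplex ℝ n, 0 < (X *ᵥ v) ⬝ᵥ (X *ᵥ v) := by
    intro v hv
    refine (dotProduct_self_nonneg _).lt_of_ne' fun h => ?_
    have hv0 := eq_zero_of_mulVec_eq_zero X y hr hv.1 (dotProduct_self_eq_zero.1 h)
    simpa [hv0] using hv.2
  obtain ⟨a, ha, hmin⟩ :=
    (isCompact_stdSimplex ℝ n).exists_forall_le' (by fun_prop : Continuous _).continuousOn hpos
  refine ⟨a, ha, fun v hv => ?_⟩
  set σ := ∑ i, v i
  rcases (Finset.sum_nonneg fun i _ => hv i : 0 ≤ σ).eq_or_lt with hσ | hσ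
  · rw [show σ = 0 from hσ.symm]; simpa using dotProduct_self_nonneg _
  have hmem : σ⁻¹ • v ∈ stdSimplex ℝ n :=
    ⟨fun i => by simpa using mul_nonneg (inv_nonneg.2 hσ.le) (hv i), by
      simp [← Finset.mul_sum, σ, inv_mul_cancel₀ hσ.ne']⟩
  have := hmin _ hmem
  rw [mulVec_smul, smul_dotProduct, dotProduct_smul, smul_eq_mul, smul_eq_mul] at this
  calc a * σ ^ 2 ≤ σ⁻¹ * (σ⁻¹ * ((X *ᵥ v) ⬝ᵥ (X *ᵥ v))) * σ ^ 2 := by gcongr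
    _ = (X *ᵥ v) ⬝ᵥ (X *ᵥ v) := by field_simp [show σ ≠ 0 from hσ.ne']

lemma exists_bound_of_sqLoss_le_sqLoss_zero (hr : ∀ i, 0 < (Xᵀ *ᵥ y) i) :
    ∃ B, ∀ v : n → ℝ, 0 ≤ v → sqLoss X y v ≤ sqLoss X y 0 → ∀ i, v i ≤ B := by
  obtain ⟨a, ha, hav⟩ := exists_pos_mul_sum_sq_le X y hr
  refine ⟨max 1 (4 * (y ⬝ᵥ y) / a), fun v hv hloss i => ?_⟩
  have hXv : (X *ᵥ v) ⬝ᵥ (X *ᵥ v) ≤ 4 * (y ⬝ᵥ y) := by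
    have h2y := dotProduct_self_nonneg (X *ᵥ v - (2 : ℝ) • y)
    simp only [sqLoss, mulVec_zero, sub_zero] at hloss
    simp only [dotProduct_sub, sub_dotProduct, dotProduct_smul, smul_dotProduct, smul_eq_mul,
      dotProduct_comm (X *ᵥ v) y] at h2y hloss
    linarith
  have hσ : ∑ j, v j ≤ max 1 (4 * (y ⬝ᵥ y) / a) := by
    rcases le_total (∑ j, v j) 1 with h | h
    · exact h.trans (le_max_left _ _)
    · refine le_max_of_le_right ((le_div_iff₀' ha).2 ?_)
      have hσσ : ∑ j, v j ≤ (∑ j, v j) ^ 2 := by nlinarith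
      nlinarith [hav v hv]
  exact (Finset.single_le_sum (fun j _ => hv j) (Finset.mem_univ i)).trans hσ

lemma dotProduct_mulVec_nonpos {M : Matrix n n ℝ} (hM : ∀ i j, i ≠ j → M i j ≤ 0) {p q : n → ℝ}
    (hp : 0 ≤ p) (hq : 0 ≤ q) (hpq : ∀ i, p i * q i = 0) : p ⬝ᵥ (M *ᵥ q) ≤ 0 := by
  simp only [dotProduct, mulVec, Finset.mul_sum]
  refine Finset.sum_nonpos fun i _ => Finset.sum_nonpos fun j _ => ?_
  rcases eq_or_ne i j with rfl | hij
  · rw [mul_left_comm, hpq, mul_zero]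
  · exact mul_nonpos_of_nonneg_of_nonpos (hp i)
      (mul_nonpos_of_nonpos_of_nonneg (hM i j hij) (hq j))

lemma mulVec_posPart_eq_zero (hM : ∀ i j, i ≠ j → (Xᵀ * X) i j ≤ 0) {v : n → ℝ}
    (hv : X *ᵥ v = 0) : X *ᵥ v⁺ = 0 := by
  have hpm : X *ᵥ v⁺ = X *ᵥ v⁻ := by
    rw [← sub_eq_zero, ← mulVec_sub, posPart_sub_negPart, hv]
  have hdisj : ∀ i, v⁺ i * v⁻ i = 0 := fun i => by
    rcases le_total (v i) 0 with h | h <;> simp [h]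
  refine dotProduct_self_eq_zero.1 (le_antisymm ?_ (dotProduct_self_nonneg _))
  calc (X *ᵥ v⁺) ⬝ᵥ (X *ᵥ v⁺) = v⁺ ⬝ᵥ ((Xᵀ * X) *ᵥ v⁻) := by
        rw [dotProduct_transpose_mul_self_mulVec, hpm]
    _ ≤ 0 := dotProduct_mulVec_nonpos hM (posPart_nonneg v) (negPart_nonneg v) hdisj

lemma mulVec_eq_of_isMinOn_regLoss {k : n → ℝ} {c : ℝ} {Ω : Set (n → ℝ)} (hΩ : Convex ℝ Ω)
    {a b : n → ℝ} (ha : a ∈ Ω) (hb : b ∈ Ω) (hamin : IsMinOn (regLoss X y k c) Ω a)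
    (hbmin : IsMinOn (regLoss X y k c) Ω b) : X *ᵥ a = X *ᵥ b := by
  set g := (Xᵀ * X) *ᵥ a - Xᵀ *ᵥ y + c • k
  set Q := (X *ᵥ (b - a)) ⬝ᵥ (X *ᵥ (b - a))
  have hb_a : g ⬝ᵥ (b - a) + (1 / 2) * Q = 0 := by
    rw [← regLoss_sub_regLoss, sub_eq_zero]
    exact le_antisymm (hbmin ha) (hamin hb)
  have hmid : 0 ≤ (1 / 2) * (g ⬝ᵥ (b - a)) + (1 / 8) * Q := by
    have hmem : (1 / 2 : ℝ) • a + (1 / 2 : ℝ) • b ∈ Ω := hΩ ha hb (by norm_num) (by norm_num)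
      (by norm_num)
    have hm := isMinOn_iff.1 hamin _ hmem
    have hsub : (1 / 2 : ℝ) • a + (1 / 2 : ℝ) • b - a = (1 / 2 : ℝ) • (b - a) := by module
    have := regLoss_sub_regLoss X y k c ((1 / 2 : ℝ) • a + (1 / 2 : ℝ) • b) a
    rw [hsub, mulVec_smul, smul_dotProduct, dotProduct_smul, dotProduct_smul, smul_eq_mul,
      smul_eq_mul, smul_eq_mul] at this
    linarith
  have hQ : Q = 0 := le_antisymm (by linarith) (dotProduct_self_nonneg _)
  rw [eq_comm, ← sub_eq_zero, ← mulVec_sub]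
  exact dotProduct_self_eq_zero.1 hQ

theorem eq_of_isMinOn_regLoss (hr : ∀ i, 0 < (Xᵀ *ᵥ y) i) (hM : ∀ i j, i ≠ j → (Xᵀ * X) i j ≤ 0)
    {k : n → ℝ} {c : ℝ} {a b : n → ℝ} (ha : a ∈ Ici 0) (hb : b ∈ Ici 0)
    (hamin : IsMinOn (regLoss X y k c) (Ici 0) a) (hbmin : IsMinOn (regLoss X y k c) (Ici 0) b) :
    a = b := by
  have hX : X *ᵥ (b - a) = 0 := by
    rw [mulVec_sub, mulVec_eq_of_isMinOn_regLoss X y (convex_Ici 0) ha hb hamin hbmin, sub_self]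
  have hX' : X *ᵥ (-(b - a)) = 0 := by rw [mulVec_neg, hX, neg_zero]
  have hpos := eq_zero_of_mulVec_eq_zero X y hr (posPart_nonneg _) (mulVec_posPart_eq_zero X hM hX)
  have hneg := eq_zero_of_mulVec_eq_zero X y hr (posPart_nonneg _) (mulVec_posPart_eq_zero X hM hX')
  rw [posPart_neg] at hneg
  rw [eq_comm, ← sub_eq_zero, ← posPart_sub_negPart (b - a), hpos, hneg, sub_zero]

lemma sqLoss_le_sqLoss_zero_of_mulVec_le {v : n → ℝ} (hv : 0 ≤ v)
    (h : (Xᵀ * X) *ᵥ v ≤ Xᵀ *ᵥ y) : sqLoss X y v ≤ sqLoss X y 0 := by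
  have hle : v ⬝ᵥ ((Xᵀ * X) *ᵥ v) ≤ v ⬝ᵥ (Xᵀ *ᵥ y) := dotProduct_le_dotProduct_of_nonneg_left h hv
  have hq : 0 ≤ v ⬝ᵥ ((Xᵀ * X) *ᵥ v) := by
    rw [dotProduct_transpose_mul_self_mulVec]; exact dotProduct_self_nonneg _
  rw [sqLoss_eq, sqLoss_eq, dotProduct_comm (Xᵀ *ᵥ y) v, mulVec_zero, dotProduct_zero,
    dotProduct_zero]
  linarith

lemma sqLoss_le_sqLoss_zero_of_isMinOn {k : n → ℝ} (hk : 0 ≤ k) {c : ℝ} (hc : 0 ≤ c) {a : n → ℝ}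
    (ha : a ∈ Ici 0) (hmin : IsMinOn (regLoss X y k c) (Ici 0) a) :
    sqLoss X y a ≤ sqLoss X y 0 := by
  have h0 := isMinOn_iff.1 hmin 0 self_mem_Ici
  have hka : 0 ≤ k ⬝ᵥ a := dotProduct_nonneg_of_nonneg hk ha
  simp only [regLoss, dotProduct_zero, mul_zero, add_zero] at h0
  nlinarith

lemma continuousOn_regLoss_one_div (k : n → ℝ) :
    ContinuousOn (fun p : ℝ × (n → ℝ) => regLoss X y k (1 / p.1) p.2) {p | p.1 ≠ 0} := by
  unfold regLoss sqLoss
  fun_prop (disch := aesop)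

end LeastSquares

theorem pos_of_mul_le_hasDerivAt {x x' a : ℝ → ℝ} {T : ℝ} (hT : 0 ≤ T)
    (hx : ContinuousOn x (Icc 0 T)) (ha : ContinuousOn a (Icc 0 T))
    (hx' : ∀ t ∈ Ioo 0 T, HasDerivAt x (x' t) t) (hle : ∀ t ∈ Ioo 0 T, a t * x t ≤ x' t)
    (h0 : 0 < x 0) : 0 < x T := by
  set A := fun t => ∫ τ in (0 : ℝ)..t, a τ
  have hAc : ContinuousOn A (Icc 0 T) := by
    simpa [uIcc_of_le hT] using
      intervalIntegral.continuousOn_primitive_interval (a := 0) (b := T)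
        (by rw [uIcc_of_le hT]; exact ha.integrableOn_Icc)
  have hA' : ∀ t ∈ Ioo 0 T, HasDerivAt A (a t) t := fun t ht =>
    intervalIntegral.integral_hasDerivAt_right
      ((ha.mono (Icc_subset_Icc le_rfl ht.2.le)).intervalIntegrable_of_Icc ht.1.le)
      ((ha.mono Ioo_subset_Icc_self).stronglyMeasurableAtFilter isOpen_Ioo t ht)
      (ha.continuousAt (Icc_mem_nhds ht.1 ht.2))
  have hmono : MonotoneOn (fun t => x t * exp (-A t)) (Icc 0 T) := by
    refine monotoneOn_of_hasDerivWithinAt_nonneg (f' := fun t => (x' t - a t * x t) * exp (-A t))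
      (convex_Icc 0 T) (hx.mul hAc.neg.rexp) (fun t ht => ?_) (fun t ht => ?_) <;>
      rw [interior_Icc] at ht
    · have hd : HasDerivAt (fun t => x t * exp (-A t))
          (x' t * exp (-A t) + x t * (exp (-A t) * -a t)) t :=
        (hx' t ht).mul (hA' t ht).neg.exp
      exact hd.hasDerivWithinAt.congr_deriv (by ring)
    · exact mul_nonneg (sub_nonneg.2 (hle t ht)) (exp_pos _).le
  have h := hmono (left_mem_Icc.2 hT) (right_mem_Icc.2 hT) hT
  simp only [A, intervalIntegral.integral_same, neg_zero, exp_zero, mul_one] at h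
  exact pos_of_mul_pos_left (h0.trans_le h) (exp_pos _).le

theorem pos_of_hasDerivAt_metzler {ι : Type*} [Fintype ι] [DecidableEq ι] {g : ℝ → ι → ℝ}
    {A : ℝ → Matrix ι ι ℝ} (hA : ∀ i, ContinuousOn (fun t => A t i i) (Ici 0))
    (hA_off : ∀ t ≥ 0, ∀ i j, i ≠ j → 0 ≤ A t i j)
    (hg : ∀ t ≥ 0, ∀ i, HasDerivAt (fun τ => g τ i) ((A t *ᵥ g t) i) t)
    (h0 : ∀ i, 0 < g 0 i) : ∀ t ≥ 0, ∀ i, 0 < g t i := by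
  have hgc : ∀ i, ContinuousOn (fun t => g t i) (Ici 0) := fun i t ht =>
    (hg t ht i).continuousAt.continuousWithinAt
  by_contra! hbad
  -- `sInf S` is the first time at which some coordinate of `g` is `≤ 0`
  set S := ⋃ i, Ici (0 : ℝ) ∩ (fun t => g t i) ⁻¹' Iic 0
  have hS : IsClosed S := isClosed_iUnion_of_finite fun i =>
    (hgc i).preimage_isClosed_of_isClosed isClosed_Ici isClosed_Iic
  have hSne : S.Nonempty := by
    obtain ⟨t, ht, i, hi⟩ := hbad
    exact ⟨t, mem_iUnion.2 ⟨i, ht, hi⟩⟩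
  have hSbdd : BddBelow S := ⟨0, fun t ht => by
    obtain ⟨i, hi, -⟩ := mem_iUnion.1 ht
    exact hi⟩
  obtain ⟨i, ht₀, hi⟩ := mem_iUnion.1 (hS.csInf_mem hSne hSbdd)
  have hbefore : ∀ t ∈ Ico 0 (sInf S), ∀ j, 0 < g t j := fun t ht j => by
    by_contra! h
    exact (csInf_le hSbdd (mem_iUnion.2 ⟨j, ht.1, h⟩)).not_gt ht.2
  refine (pos_of_mul_le_hasDerivAt ht₀ ((hgc i).mono Icc_subset_Ici_self)
    ((hA i).mono Icc_subset_Ici_self) (fun t ht => hg t ht.1.le i) (fun t ht => ?_)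
    (h0 i)).not_ge hi
  rw [mulVec, dotProduct, ← Finset.add_sum_erase _ _ (Finset.mem_univ i)]
  exact le_add_of_nonneg_right (Finset.sum_nonneg fun j hj =>
    mul_nonneg (hA_off t ht.1.le i j (Finset.ne_of_mem_erase hj).symm)
      (hbefore t ⟨ht.1.le, ht.2⟩ j).le)

theorem mul_integral_mem_Icc_of_monotoneOn {f : ℝ → ℝ} {T : ℝ} (hT : 0 < T)
    (hf : MonotoneOn f (Icc 0 T)) (hf0 : 0 ≤ f 0) :
    (1 / T) * ∫ t in (0 : ℝ)..T, f t ∈ Icc 0 (f T) := by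
  have hint : IntervalIntegrable f MeasureTheory.volume 0 T :=
    (hf.mono (by rw [uIcc_of_le hT.le])).intervalIntegrable
  refine ⟨mul_nonneg (by positivity) (intervalIntegral.integral_nonneg hT.le fun t ht =>
    hf0.trans (hf (left_mem_Icc.2 hT.le) ht ht.1)), ?_⟩
  have h := intervalIntegral.integral_mono_on hT.le hint intervalIntegrable_const
    fun t ht => hf ht (right_mem_Icc.2 hT.le) ht.2
  rw [intervalIntegral.integral_const, smul_eq_mul] at h
  rw [one_div_mul_eq_div, div_le_iff₀ hT]
  linarith

section DLNFlow

variable {n : Type*} [Fintype n]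

def IsDLNTrajectory (M : Matrix n n ℝ) (r : n → ℝ) (u : ℝ → n → ℝ) : Prop :=
  ∀ t ≥ (0 : ℝ), ∀ i, HasDerivAt (fun τ => u τ i) (u t i * (r i - (M *ᵥ u t) i)) t

noncomputable def timeAverage (u : ℝ → n → ℝ) (T : ℝ) : n → ℝ :=
  fun i => (1 / T) * ∫ t in (0 : ℝ)..T, u t i

namespace IsDLNTrajectory

variable {M : Matrix n n ℝ} {r : n → ℝ} {u : ℝ → n → ℝ}

lemma continuousOn (hu : IsDLNTrajectory M r u) (i : n) :
    ContinuousOn (fun t => u t i) (Ici 0) :=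
  fun t ht => (hu t ht i).continuousAt.continuousWithinAt

lemma continuousOn_mulVec (hu : IsDLNTrajectory M r u) (i : n) :
    ContinuousOn (fun t => (M *ᵥ u t) i) (Ici 0) :=
  continuousOn_finsetSum _ fun j _ => continuousOn_const.mul (hu.continuousOn j)

lemma continuousOn_sub_mulVec (hu : IsDLNTrajectory M r u) (i : n) :
    ContinuousOn (fun t => r i - (M *ᵥ u t) i) (Ici 0) :=
  continuousOn_const.sub (hu.continuousOn_mulVec i)

lemma hasDerivAt_mulVec (hu : IsDLNTrajectory M r u) {t : ℝ} (ht : 0 ≤ t) (i : n) :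
    HasDerivAt (fun τ => (M *ᵥ u τ) i) (∑ j, M i j * (u t j * (r j - (M *ᵥ u t) j))) t :=
  HasDerivAt.fun_sum fun j _ => (hu t ht j).const_mul (M i j)

theorem pos [DecidableEq n] (hu : IsDLNTrajectory M r u) (h0 : ∀ i, 0 < u 0 i) :
    ∀ t ≥ 0, ∀ i, 0 < u t i :=
  pos_of_hasDerivAt_metzler (A := fun t => diagonal fun i => r i - (M *ᵥ u t) i)
    (fun i => by simpa using hu.continuousOn_sub_mulVec i)
    (fun t _ i j hij => by simp [diagonal_apply_ne _ hij])
    (fun t ht i => by simpa [mulVec_diagonal, mul_comm] using hu t ht i) h0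

theorem mulVec_lt [DecidableEq n] (hu : IsDLNTrajectory M r u) (hM : ∀ i j, i ≠ j → M i j ≤ 0)
    (h0 : ∀ i, 0 < u 0 i) (hg0 : ∀ i, (M *ᵥ u 0) i < r i) : ∀ t ≥ 0, ∀ i, (M *ᵥ u t) i < r i := by
  have hpos := hu.pos h0
  -- `g = r - M u` solves `g' = -M diag(u) g`, whose off-diagonal coefficients are `≥ 0`
  have := pos_of_hasDerivAt_metzler (g := fun t i => r i - (M *ᵥ u t) i)
    (A := fun t => Matrix.of fun i j => -(M i j * u t j))
    (fun i => ((hu.continuousOn i).const_smul (M i i)).neg)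
    (fun t ht i j hij =>
      neg_nonneg.2 (mul_nonpos_of_nonpos_of_nonneg (hM i j hij) (hpos t ht j).le))
    (fun t ht i => by
      refine ((hasDerivAt_const t (r i)).sub (hu.hasDerivAt_mulVec ht i)).congr_deriv ?_
      simp only [mulVec, dotProduct, of_apply, zero_sub, ← Finset.sum_neg_distrib]
      exact Finset.sum_congr rfl fun j _ => by ring)
    (fun i => sub_pos.2 (hg0 i))
  exact fun t ht i => sub_pos.1 (this t ht i)

lemma monotoneOn [DecidableEq n] (hu : IsDLNTrajectory M r u) (hM : ∀ i j, i ≠ j → M i j ≤ 0)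
    (h0 : ∀ i, 0 < u 0 i) (hg0 : ∀ i, (M *ᵥ u 0) i < r i) (i : n) :
    MonotoneOn (fun t => u t i) (Ici 0) :=
  monotoneOn_of_hasDerivWithinAt_nonneg (convex_Ici 0) (hu.continuousOn i)
    (fun t ht => (hu t (interior_subset ht) i).hasDerivWithinAt)
    (fun t ht => mul_nonneg (hu.pos h0 t (interior_subset ht) i).le
      (sub_nonneg.2 (hu.mulVec_lt hM h0 hg0 t (interior_subset ht) i).le))

theorem log_sub_log (hu : IsDLNTrajectory M r u) (hpos : ∀ t ≥ 0, ∀ i, 0 < u t i) {T : ℝ}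
    (hT : 0 ≤ T) (i : n) :
    log (u T i) - log (u 0 i) = ∫ t in (0 : ℝ)..T, (r i - (M *ᵥ u t) i) := by
  refine (intervalIntegral.integral_eq_sub_of_hasDerivAt (f := fun t => log (u t i))
    (fun t ht => ?_) ?_).symm
  · rw [uIcc_of_le hT] at ht
    refine ((hu t ht.1 i).log (hpos t ht.1 i).ne').congr_deriv ?_
    field_simp [(hpos t ht.1 i).ne']
  · refine ContinuousOn.intervalIntegrable ?_
    rw [uIcc_of_le hT]
    exact (hu.continuousOn_sub_mulVec i).mono Icc_subset_Ici_self

theorem mulVec_timeAverage_sub (hu : IsDLNTrajectory M r u) (hpos : ∀ t ≥ 0, ∀ i, 0 < u t i)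
    {T : ℝ} (hT : 0 < T) (i : n) :
    (M *ᵥ timeAverage u T) i - r i = (log (u 0 i) - log (u T i)) / T := by
  have hsub : uIcc 0 T ⊆ Ici 0 := by rw [uIcc_of_le hT.le]; exact Icc_subset_Ici_self
  have hint : ∀ j, IntervalIntegrable (fun t => u t j) MeasureTheory.volume 0 T := fun j =>
    ((hu.continuousOn j).mono hsub).intervalIntegrable
  have hMint : ∫ t in (0 : ℝ)..T, (M *ᵥ u t) i = T * (M *ᵥ timeAverage u T) i := by
    simp only [mulVec, dotProduct, timeAverage, Finset.mul_sum]
    rw [intervalIntegral.integral_finsetSum fun j _ => (hint j).const_mul (M i j)]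
    refine Finset.sum_congr rfl fun j _ => ?_
    rw [intervalIntegral.integral_const_mul]
    field_simp
  have h := hu.log_sub_log hpos hT.le i
  rw [intervalIntegral.integral_sub intervalIntegrable_const, intervalIntegral.integral_const,
    smul_eq_mul, hMint] at h
  · field_simp
    linarith
  · exact ((hu.continuousOn_mulVec i).mono hsub).intervalIntegrable

-- the penalty `k / s` exactly cancels the initial scale `ε ^ k`
theorem mulVec_timeAverage_sub_add_smul (hu : IsDLNTrajectory M r u)
    (hpos : ∀ t ≥ 0, ∀ i, 0 < u t i) {C k : n → ℝ} (hC : ∀ i, 0 < C i) {ε : ℝ} (hε : 0 < ε)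
    (hu0 : ∀ i, u 0 i = C i * ε ^ k i) {s : ℝ} (hT : 0 < s * log (1 / ε)) (i : n) :
    (M *ᵥ timeAverage u (s * log (1 / ε)) - r + (1 / s) • k) i
      = (log (C i) - log (u (s * log (1 / ε)) i)) / (s * log (1 / ε)) := by
  have h := hu.mulVec_timeAverage_sub hpos hT i
  rw [hu0 i, log_mul (hC i).ne' (rpow_pos_of_pos hε _).ne', log_rpow hε] at h
  have hs : s ≠ 0 := left_ne_zero_of_mul hT.ne'
  have hL : log (1 / ε) = -log ε := by rw [one_div, log_inv]
  have hlog : log ε ≠ 0 := by simpa [hL] using right_ne_zero_of_mul hT.ne'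
  simp only [Pi.add_apply, Pi.sub_apply, Pi.smul_apply, smul_eq_mul]
  rw [h, hL]
  field_simp
  ring

theorem timeAverage_mem_Icc [DecidableEq n] (hu : IsDLNTrajectory M r u)
    (hM : ∀ i j, i ≠ j → M i j ≤ 0) (h0 : ∀ i, 0 < u 0 i) (hg0 : ∀ i, (M *ᵥ u 0) i < r i) {T : ℝ}
    (hT : 0 < T) (i : n) : timeAverage u T i ∈ Icc 0 (u T i) :=
  mul_integral_mem_Icc_of_monotoneOn hT ((hu.monotoneOn hM h0 hg0 i).mono Icc_subset_Ici_self)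
    (h0 i).le

end IsDLNTrajectory

end DLNFlow

section Convergence

lemma log_sub_log_mul_sub_le {C a B ρ w : ℝ} (hC : 0 < C) (ha : 0 < a) (haB : a ≤ B)
    (hρ : 0 ≤ ρ) (hρa : ρ ≤ a) (hw : 0 ≤ w) (hwB : w ≤ B) :
    (log C - log a) * (ρ - w) ≤ C + B * |log B - log C| := by
  have hB := mul_nonneg (ha.le.trans haB) (abs_nonneg (log B - log C))
  rcases le_total (log a) (log C) with h | h
  · have hlog : (log C - log a) * a ≤ C - a := by
      have := log_le_sub_one_of_pos (div_pos hC ha)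
      rw [log_div hC.ne' ha.ne'] at this
      calc (log C - log a) * a ≤ (C / a - 1) * a := mul_le_mul_of_nonneg_right this ha.le
        _ = C - a := by field_simp
    have := mul_le_mul_of_nonneg_left (by linarith : ρ - w ≤ a) (sub_nonneg.2 h)
    linarith
  · have h1 : log a - log C ≤ |log B - log C| :=
      (sub_le_sub_right (log_le_log ha haB) _).trans (le_abs_self _)
    have h2 := mul_le_mul h1 hwB hw (abs_nonneg _)
    have h3 := mul_le_mul_of_nonneg_left (by linarith : w - ρ ≤ w) (sub_nonneg.2 h)
    linarith

theorem tendstoUniformlyOn_of_isMinOn {P E ι : Type*} [TopologicalSpace P]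
    [FirstCountableTopology P] [PseudoMetricSpace E] {l : Filter ι} [l.IsCountablyGenerated]
    {Φ : P → E → ℝ} {K : Set P} {Ω S : Set E} (hK : IsCompact K) (hS : IsCompact S) (hSΩ : S ⊆ Ω)
    (hΦ : ContinuousOn (Function.uncurry Φ) (K ×ˢ Ω)) {μ : P → E} (hμS : ∀ s ∈ K, μ s ∈ S)
    (hμ : ∀ s ∈ K, IsMinOn (Φ s) Ω (μ s)) (huniq : ∀ s ∈ K, ∀ x ∈ Ω, IsMinOn (Φ s) Ω x → x = μ s)
    {ρ : ι → P → E} {δ : ι → ℝ} (hδ : Tendsto δ l (𝓝 0))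
    (hρ : ∀ᶠ e in l, ∀ s ∈ K, ρ e s ∈ S ∧ Φ s (ρ e s) ≤ Φ s (μ s) + δ e) :
    TendstoUniformlyOn ρ μ l K := by
  rw [Metric.tendstoUniformlyOn_iff]
  intro η hη
  by_contra hbad
  have hfreq : ∃ᶠ e in l, (∃ s ∈ K, η ≤ dist (μ s) (ρ e s)) ∧
      ∀ s ∈ K, ρ e s ∈ S ∧ Φ s (ρ e s) ≤ Φ s (μ s) + δ e :=
    ((not_eventually.1 hbad).mono fun e he => by simpa using he).and_eventually hρ
  obtain ⟨e, he, hgood⟩ := exists_seq_forall_of_frequently hfreq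
  choose s hsK hsη using fun m => (hgood m).1
  obtain ⟨⟨s₀, x₀, ν⟩, ⟨hs₀, hx₀, hν⟩, φ, hφ, hlim⟩ := (hK.prod (hS.prod hS)).tendsto_subseq
    (x := fun m => (s m, μ (s m), ρ (e m) (s m)))
    fun m => ⟨hsK m, hμS _ (hsK m), ((hgood m).2 _ (hsK m)).1⟩
  obtain ⟨hs, hlim⟩ := (Prod.tendsto_iff _ _).1 hlim
  obtain ⟨hx, hνlim⟩ := (Prod.tendsto_iff _ _).1 hlim
  have hΦlim : ∀ x ∈ Ω, ∀ w : ℕ → E, (∀ m, w m ∈ Ω) → Tendsto w atTop (𝓝 x) →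
      Tendsto (fun m => Φ (s (φ m)) (w m)) atTop (𝓝 (Φ s₀ x)) := fun x hx w hw hwx =>
    (hΦ (s₀, x) ⟨hs₀, hx⟩).tendsto.comp
      (tendsto_nhdsWithin_iff.2 ⟨hs.prodMk_nhds hwx, .of_forall fun m => ⟨hsK _, hw m⟩⟩)
  have hx₀min : IsMinOn (Φ s₀) Ω x₀ := fun x hx' =>
    le_of_tendsto_of_tendsto' (hΦlim x₀ (hSΩ hx₀) _ (fun m => hSΩ (hμS _ (hsK _))) hx)
      (hΦlim x hx' _ (fun _ => hx') tendsto_const_nhds) fun m => hμ _ (hsK _) hx'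
  have hνmin : IsMinOn (Φ s₀) Ω ν := fun x hx' => by
    refine le_trans ?_ (isMinOn_iff.1 hx₀min x hx')
    simpa using le_of_tendsto_of_tendsto'
      (hΦlim ν (hSΩ hν) _ (fun m => hSΩ ((hgood _).2 _ (hsK _)).1) hνlim)
      ((hΦlim x₀ (hSΩ hx₀) _ (fun m => hSΩ (hμS _ (hsK _))) hx).add
        (hδ.comp (he.comp hφ.tendsto_atTop)))
      fun m => ((hgood (φ m)).2 _ (hsK _)).2
  have hdist : η ≤ dist x₀ ν :=
    ge_of_tendsto (hx.dist hνlim) (.of_forall fun m => hsη (φ m))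
  rw [huniq s₀ hs₀ x₀ (hSΩ hx₀) hx₀min, huniq s₀ hs₀ ν (hSΩ hν) hνmin, dist_self] at hdist
  exact hdist.not_gt hη

lemma eventually_mulVec_rpow_lt {n : Type*} [Fintype n] {M : Matrix n n ℝ} {r C k : n → ℝ}
    (hr : ∀ i, 0 < r i) (hk : ∀ i, 0 < k i) :
    ∀ᶠ ε in 𝓝[>] (0 : ℝ), ∀ i, (M *ᵥ fun j => C j * ε ^ k j) i < r i := by
  have hinit : Tendsto (fun ε : ℝ => fun j => C j * ε ^ k j) (𝓝[>] 0) (𝓝 0) := by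
    refine tendsto_pi_nhds.2 fun j => ?_
    have h := (continuousAt_rpow_const 0 (k j) (Or.inr (hk j).le)).tendsto.const_mul (C j)
    rw [zero_rpow (hk j).ne', mul_zero] at h
    exact h.mono_left nhdsWithin_le_nhds
  have hM : Tendsto (fun ε : ℝ => M *ᵥ fun j => C j * ε ^ k j) (𝓝[>] 0) (𝓝 0) := by
    simpa [Function.comp_def] using ((Continuous.matrix_mulVec (A := fun _ : n → ℝ => M)
      continuous_const continuous_id).tendsto 0).comp hinit
  exact eventually_all.2 fun i => ((tendsto_pi_nhds.1 hM) i).eventually_lt_const (hr i)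

lemma tendsto_div_mul_log_one_div (Q : ℝ) {s : ℝ} (hs : 0 < s) :
    Tendsto (fun ε => Q / (s * log (1 / ε))) (𝓝[>] 0) (𝓝 0) := by
  simp only [one_div]
  exact tendsto_const_nhds.div_atTop
    ((tendsto_log_atTop.comp tendsto_inv_nhdsGT_zero).const_mul_atTop hs)

variable {m n : Type*} [Fintype m] [Fintype n] [DecidableEq n] (X : Matrix m n ℝ) (y : m → ℝ)

theorem IsDLNTrajectory.sqLoss_le_sqLoss_zero (hM : ∀ i j, i ≠ j → (Xᵀ * X) i j ≤ 0)
    {u : ℝ → n → ℝ} (hu : IsDLNTrajectory (Xᵀ * X) (Xᵀ *ᵥ y) u) (h0 : ∀ i, 0 < u 0 i)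
    (hg0 : ∀ i, ((Xᵀ * X) *ᵥ u 0) i < (Xᵀ *ᵥ y) i) {t : ℝ} (ht : 0 ≤ t) :
    sqLoss X y (u t) ≤ sqLoss X y 0 :=
  sqLoss_le_sqLoss_zero_of_mulVec_le X y (fun j => (hu.pos h0 t ht j).le)
    fun j => (hu.mulVec_lt hM h0 hg0 t ht j).le

theorem IsDLNTrajectory.regLoss_timeAverage_le (hM : ∀ i j, i ≠ j → (Xᵀ * X) i j ≤ 0)
    {u : ℝ → n → ℝ} (hu : IsDLNTrajectory (Xᵀ * X) (Xᵀ *ᵥ y) u) {C k : n → ℝ}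
    (hC : ∀ i, 0 < C i) {ε : ℝ} (hε : 0 < ε) (hu0 : ∀ i, u 0 i = C i * ε ^ k i)
    (hg0 : ∀ i, ((Xᵀ * X) *ᵥ u 0) i < (Xᵀ *ᵥ y) i) {B : ℝ}
    (hB : ∀ v : n → ℝ, 0 ≤ v → sqLoss X y v ≤ sqLoss X y 0 → ∀ i, v i ≤ B) {s : ℝ}
    (hT : 0 < s * log (1 / ε)) {w : n → ℝ} (hw : w ∈ Icc 0 (fun _ => B)) :
    timeAverage u (s * log (1 / ε)) ∈ Icc 0 (fun _ => B) ∧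
      regLoss X y k (1 / s) (timeAverage u (s * log (1 / ε))) ≤
        regLoss X y k (1 / s) w + (∑ i, (C i + B * |log B - log (C i)|)) / (s * log (1 / ε)) := by
  set T := s * log (1 / ε)
  set ρ := timeAverage u T
  have h0 : ∀ i, 0 < u 0 i := fun i => by rw [hu0]; exact mul_pos (hC i) (rpow_pos_of_pos hε _)
  have hpos := hu.pos h0 T hT.le
  have hρ := hu.timeAverage_mem_Icc hM h0 hg0 hT
  have huB := hB (u T) (fun i => (hpos i).le) (hu.sqLoss_le_sqLoss_zero X y hM h0 hg0 hT.le)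
  refine ⟨⟨fun i => (hρ i).1, fun i => (hρ i).2.trans (huB i)⟩, ?_⟩
  have hgrad := hu.mulVec_timeAverage_sub_add_smul (hu.pos h0) hC hε hu0 hT
  have hsplit := regLoss_sub_regLoss X y k (1 / s) w ρ
  have hswap : ((Xᵀ * X) *ᵥ ρ - Xᵀ *ᵥ y + (1 / s) • k) ⬝ᵥ (w - ρ)
      = -(((Xᵀ * X) *ᵥ ρ - Xᵀ *ᵥ y + (1 / s) • k) ⬝ᵥ (ρ - w)) := by
    rw [← dotProduct_neg, neg_sub]
  calc regLoss X y k (1 / s) ρ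
      ≤ regLoss X y k (1 / s) w + ((Xᵀ * X) *ᵥ ρ - Xᵀ *ᵥ y + (1 / s) • k) ⬝ᵥ (ρ - w) := by
        linarith [dotProduct_self_nonneg (X *ᵥ (w - ρ))]
    _ ≤ _ := by
        gcongr
        rw [dotProduct, Finset.sum_div]
        refine Finset.sum_le_sum fun i _ => ?_
        rw [hgrad i, div_mul_eq_mul_div]
        gcongr
        exact log_sub_log_mul_sub_le (hC i) (hpos i) (huB i) (hρ i).1 (hρ i).2 (hw.1 i) (hw.2 i)

theorem eventually_timeAverage_mem_Icc_and_regLoss_le (hr : ∀ i, 0 < (Xᵀ *ᵥ y) i)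
    (hM : ∀ i j, i ≠ j → (Xᵀ * X) i j ≤ 0) {C k : n → ℝ} (hC : ∀ i, 0 < C i) (hk : ∀ i, 0 < k i)
    {θ : ℝ → ℝ → n → ℝ} (hθinit : ∀ ε ∈ Ioc (0 : ℝ) 1, ∀ i, θ ε 0 i = C i * ε ^ k i)
    (hθode : ∀ ε ∈ Ioc (0 : ℝ) 1, IsDLNTrajectory (Xᵀ * X) (Xᵀ *ᵥ y) (θ ε)) {B : ℝ}
    (hB : ∀ v : n → ℝ, 0 ≤ v → sqLoss X y v ≤ sqLoss X y 0 → ∀ i, v i ≤ B) {s₀ : ℝ}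
    (hs₀ : 0 < s₀) {w : ℝ → n → ℝ} (hw : ∀ s ≥ s₀, w s ∈ Icc 0 (fun _ => B)) :
    ∃ Q, ∀ᶠ ε in 𝓝[>] 0, ∀ s ≥ s₀, timeAverage (θ ε) (s * log (1 / ε)) ∈ Icc 0 (fun _ => B) ∧
      regLoss X y k (1 / s) (timeAverage (θ ε) (s * log (1 / ε))) ≤
        regLoss X y k (1 / s) (w s) + Q / (s₀ * log (1 / ε)) := by
  refine ⟨∑ i, (C i + B * |log B - log (C i)|), ?_⟩
  filter_upwards [eventually_mulVec_rpow_lt (M := Xᵀ * X) (C := C) hr hk,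
    Ioo_mem_nhdsGT zero_lt_one] with ε hg0 hε s hs
  have hε' : ε ∈ Ioc 0 1 := Ioo_subset_Ioc_self hε
  have hu0 : θ ε 0 = fun j => C j * ε ^ k j := funext (hθinit ε hε')
  have hL : 0 < log (1 / ε) := log_pos (one_lt_one_div hε.1 hε.2)
  obtain ⟨hρB, hρ⟩ := (hθode ε hε').regLoss_timeAverage_le X y hM hC hε.1 (hθinit ε hε')
    (hu0 ▸ hg0) hB (mul_pos (hs₀.trans_le hs) hL) (hw s hs)
  refine ⟨hρB, hρ.trans (add_le_add_right ?_ _)⟩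
  have hQ : 0 ≤ ∑ i, (C i + B * |log B - log (C i)|) := Finset.sum_nonneg fun i _ =>
    add_nonneg (hC i).le (mul_nonneg (hB 0 le_rfl le_rfl i) (abs_nonneg _))
  gcongr

end Convergence

theorem dln_time_average_convergence_general (n d : ℕ)
    (X : Matrix (Fin n) (Fin d) ℝ) (y : Fin n → ℝ)
    (M : Matrix (Fin d) (Fin d) ℝ) (r : Fin d → ℝ)
    (hM : M = Xᵀ * X) (hr : r = Xᵀ *ᵥ y)
    (hA1 : ∀ i, 0 < r i)
    (hA2 : ∀ i j, i ≠ j → M i j ≤ 0)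
    (C k : Fin d → ℝ) (hC : ∀ i, 0 < C i) (hk : ∀ i, 0 < k i)
    (f : (Fin d → ℝ) → ℝ)
    (hf : ∀ θ : Fin d → ℝ, f θ =
      (1 / 2) * ∑ j, (y j) ^ 2 - ∑ i, r i * θ i + (1 / 2) * ∑ i, θ i * (M *ᵥ θ) i)
    (μ : ℝ → Fin d → ℝ)
    (hμ : ∀ s > (0 : ℝ),
      (∀ i, 0 ≤ μ s i) ∧
      ∀ θ' : Fin d → ℝ, (∀ i, 0 ≤ θ' i) →
        f (μ s) + (1 / s) * ∑ i, k i * μ s i ≤ f θ' + (1 / s) * ∑ i, k i * θ' i)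
    (θ : ℝ → ℝ → Fin d → ℝ)
    (hθinit : ∀ ε ∈ Set.Ioc (0 : ℝ) 1, ∀ i, θ ε 0 i = C i * ε ^ k i)
    (hθode : ∀ ε ∈ Set.Ioc (0 : ℝ) 1, ∀ t ≥ (0 : ℝ), ∀ i,
      HasDerivAt (fun τ => θ ε τ i) (θ ε t i * (r i - (M *ᵥ θ ε t) i)) t) :
    (∀ s > (0 : ℝ),
      Filter.Tendsto
        (fun ε => fun i =>
          (1 / (s * Real.log (1 / ε))) *
            ∫ t in (0 : ℝ)..(s * Real.log (1 / ε)), θ ε t i)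
        (nhdsWithin 0 (Set.Ioi 0)) (nhds (μ s))) ∧
    (∀ K : Set ℝ, IsCompact K → K ⊆ Set.Ioi 0 →
      TendstoUniformlyOn
        (fun ε s => fun i =>
          (1 / (s * Real.log (1 / ε))) *
            ∫ t in (0 : ℝ)..(s * Real.log (1 / ε)), θ ε t i)
        μ (nhdsWithin 0 (Set.Ioi 0)) K) := by
  subst hM hr
  have hF : ∀ c θ, f θ + c * ∑ i, k i * θ i = regLoss X y k c θ := fun c θ => by
    simp [hf, regLoss, sqLoss_eq, dotProduct, sq]
  have hμmin : ∀ s > 0, IsMinOn (regLoss X y k (1 / s)) (Ici 0) (μ s) := fun s hs =>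
    isMinOn_iff.2 fun θ' hθ' => by simpa only [hF] using (hμ s hs).2 θ' hθ'
  obtain ⟨B, hB⟩ := exists_bound_of_sqLoss_le_sqLoss_zero X y hA1
  have hμB : ∀ s > 0, μ s ∈ Icc 0 (fun _ => B) := fun s hs =>
    ⟨(hμ s hs).1, hB _ (hμ s hs).1 (sqLoss_le_sqLoss_zero_of_isMinOn X y (fun i => (hk i).le)
      (by positivity) (hμ s hs).1 (hμmin s hs))⟩
  have hunif : ∀ K : Set ℝ, IsCompact K → K ⊆ Ioi 0 →
      TendstoUniformlyOn (fun ε s => timeAverage (θ ε) (s * log (1 / ε))) μ (𝓝[>] 0) K := by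
    intro K hK hK0
    obtain ⟨s₀, hs₀, hs₀K⟩ := hK.exists_forall_le' continuousOn_id hK0
    obtain ⟨Q, hQ⟩ := eventually_timeAverage_mem_Icc_and_regLoss_le X y hA1 hA2 hC hk hθinit
      hθode hB hs₀ fun s hs => hμB s (hs₀.trans_le hs)
    exact tendstoUniformlyOn_of_isMinOn hK isCompact_Icc Icc_subset_Ici_self
      ((continuousOn_regLoss_one_div X y k).mono fun p hp => (hK0 hp.1).ne')
      (fun s hs => hμB s (hK0 hs)) (fun s hs => hμmin s (hK0 hs))
      (fun s hs x hx hxmin => eq_of_isMinOn_regLoss X y hA1 hA2 hx (hμ s (hK0 hs)).1 hxmin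
        (hμmin s (hK0 hs))) (tendsto_div_mul_log_one_div Q hs₀)
      (hQ.mono fun ε hε s hs => hε s (hs₀K s hs))
  exact ⟨fun s hs => (hunif {s} isCompact_singleton (singleton_subset_iff.2 hs)).tendsto_at rfl,
    hunif⟩

/-- Theorem 1, point 3: Under (A1) and (A2), the time average
`(1/(s log(1/ε))) ∫₀^{s log(1/ε)} θ^{(ε)}(t) dt` converges to the regularized
minimizer `μ(s)` as `ε → 0⁺`, uniformly for `s` in compact subsets of `(0,∞)`. -/
theorem dln_time_average_convergence (n d : ℕ) (hn : 0 < n) (hd : 0 < d)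
    (X : Matrix (Fin n) (Fin d) ℝ) (y : Fin n → ℝ)
    (M : Matrix (Fin d) (Fin d) ℝ) (r : Fin d → ℝ)
    (hM : M = Xᵀ * X) (hr : r = Xᵀ *ᵥ y)
    (hA1 : ∀ i, 0 < r i)
    (hA2 : ∀ i j, i ≠ j → M i j ≤ 0)
    (C k : Fin d → ℝ) (hC : ∀ i, 0 < C i) (hk : ∀ i, 0 < k i)
    (f : (Fin d → ℝ) → ℝ)
    (hf : ∀ θ : Fin d → ℝ, f θ =
      (1 / 2) * ∑ j, (y j) ^ 2 - ∑ i, r i * θ i + (1 / 2) * ∑ i, θ i * (M *ᵥ θ) i)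
    (μ : ℝ → Fin d → ℝ)
    (hμ : ∀ s > (0 : ℝ),
      (∀ i, 0 ≤ μ s i) ∧
      ∀ θ' : Fin d → ℝ, (∀ i, 0 ≤ θ' i) →
        f (μ s) + (1 / s) * ∑ i, k i * μ s i ≤ f θ' + (1 / s) * ∑ i, k i * θ' i)
    (θ : ℝ → ℝ → Fin d → ℝ)
    (hθinit : ∀ ε ∈ Set.Ioc (0 : ℝ) 1, ∀ i, θ ε 0 i = C i * ε ^ k i)
    (hθode : ∀ ε ∈ Set.Ioc (0 : ℝ) 1, ∀ t ≥ (0 : ℝ), ∀ i,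
      HasDerivAt (fun τ => θ ε τ i) (θ ε t i * (r i - (M *ᵥ θ ε t) i)) t) :
    (∀ s > (0 : ℝ),
      Filter.Tendsto
        (fun ε => fun i =>
          (1 / (s * Real.log (1 / ε))) *
            ∫ t in (0 : ℝ)..(s * Real.log (1 / ε)), θ ε t i)
        (nhdsWithin 0 (Set.Ioi 0)) (nhds (μ s))) ∧
    (∀ K : Set ℝ, IsCompact K → K ⊆ Set.Ioi 0 →
      TendstoUniformlyOn
        (fun ε s => fun i =>
          (1 / (s * Real.log (1 / ε))) *
            ∫ t in (0 : ℝ)..(s * Real.log (1 / ε)), θ ε t i)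
        μ (nhdsWithin 0 (Set.Ioi 0)) K) :=
  dln_time_average_convergence_general n d X y M r hM hr hA1 hA2 C k hC hk f hf μ hμ θ hθinit hθode
end

section
/- Assume (A1) r has all coordinates strictly positive and (A2) M_{ij} ≤ 0 for all i ≠ j, where M = XᵀX and r = Xᵀy. For s > 0, let μ(s) be the unique minimizer over {θ ≥ 0} of f(θ) + (1/s)⟨k, θ⟩ and I(s) = {i : μ_i(s) > 0}. Then for every s > 0: I(s) = {1,…,d} if and only if M⁻¹r − (1/s)·M⁻¹k has all coordinates strictly positive, if and only if s > s_* := max_{i ∈ {1,…,d}} (M⁻¹k)_i / (M⁻¹r)_i. -/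
open Matrix Finset

namespace DLN16

variable {n d : ℕ}

lemma sum_mulVec_eq_double (M : Matrix (Fin d) (Fin d) ℝ) (a b : Fin d → ℝ) :
    ∑ i, a i * (M *ᵥ b) i = ∑ i, ∑ j, M i j * (a i * b j) := by
  simp only [Matrix.mulVec, dotProduct, Finset.mul_sum]
  exact Finset.sum_congr rfl fun i _ => Finset.sum_congr rfl fun j _ => by ring

lemma swap_bilin (M : Matrix (Fin d) (Fin d) ℝ) (hsym : ∀ i j, M i j = M j i)
    (a b : Fin d → ℝ) :
    ∑ i, ∑ j, M i j * (a i * b j) = ∑ i, ∑ j, M i j * (b i * a j) := by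
  rw [Finset.sum_comm]
  exact Finset.sum_congr rfl fun i _ => Finset.sum_congr rfl fun j _ => by
    rw [hsym]; ring

lemma quad_expand (M : Matrix (Fin d) (Fin d) ℝ) (hsym : ∀ i j, M i j = M j i)
    (θ θ' : Fin d → ℝ) :
    ∑ i, θ' i * (M *ᵥ θ') i
      = ∑ i, θ i * (M *ᵥ θ) i + 2 * ∑ i, (θ' i - θ i) * (M *ᵥ θ) i
        + ∑ i, (θ' i - θ i) * (M *ᵥ fun j => θ' j - θ j) i := by
  rw [sum_mulVec_eq_double, sum_mulVec_eq_double, sum_mulVec_eq_double,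
    sum_mulVec_eq_double, two_mul]
  nth_rewrite 2 [swap_bilin M hsym (fun i => θ' i - θ i) θ]
  simp only [← Finset.sum_add_distrib]
  exact Finset.sum_congr rfl fun i _ => Finset.sum_congr rfl fun j _ => by ring

lemma quad_eq_sum_sq (X : Matrix (Fin n) (Fin d) ℝ) (v : Fin d → ℝ) :
    ∑ i, v i * ((Xᵀ * X) *ᵥ v) i = ∑ j, ((X *ᵥ v) j) ^ 2 := by
  have h1 : ∑ i, v i * ((Xᵀ * X) *ᵥ v) i = v ⬝ᵥ ((Xᵀ * X) *ᵥ v) := rfl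
  rw [h1, ← Matrix.mulVec_mulVec, Matrix.dotProduct_mulVec, Matrix.vecMul_transpose]
  simp [dotProduct, sq]

lemma dot_transpose (X : Matrix (Fin n) (Fin d) ℝ) (y : Fin n → ℝ) (w : Fin d → ℝ) :
    ∑ i, (Xᵀ *ᵥ y) i * w i = ∑ j, y j * (X *ᵥ w) j := by
  have h1 : ∑ i, (Xᵀ *ᵥ y) i * w i = (Xᵀ *ᵥ y) ⬝ᵥ w := rfl
  have h2 : ∑ j, y j * (X *ᵥ w) j = y ⬝ᵥ (X *ᵥ w) := rfl
  rw [h1, h2, Matrix.mulVec_transpose, Matrix.dotProduct_mulVec]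

/-- Z-matrix comparison: the quadratic form at `|v|` is at most the one at `v`. -/
lemma quad_abs_le (M : Matrix (Fin d) (Fin d) ℝ) (hA2 : ∀ i j, i ≠ j → M i j ≤ 0)
    (v : Fin d → ℝ) :
    ∑ i, |v i| * (M *ᵥ fun j => |v j|) i ≤ ∑ i, v i * (M *ᵥ v) i := by
  rw [sum_mulVec_eq_double, sum_mulVec_eq_double]
  refine Finset.sum_le_sum fun i _ => Finset.sum_le_sum fun j _ => ?_
  by_cases hij : i = j
  · subst hij
    rw [abs_mul_abs_self]
  · have h1 : v i * v j ≤ |v i| * |v j| := by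
      calc v i * v j ≤ |v i * v j| := le_abs_self _
        _ = |v i| * |v j| := abs_mul _ _
    exact mul_le_mul_of_nonpos_left h1 (hA2 i j hij)

end DLN16

open DLN16

/-- Under (A1) and (A2), for any `s > 0`, the support `I(s)` of the
regularized minimizer `μ(s)` is full, `I(s) = {1,…,d}`, iff
`M⁻¹r − (1/s) M⁻¹k > 0` coordinatewise, iff `s > s_* = maxᵢ (M⁻¹k)ᵢ / (M⁻¹r)ᵢ`. -/
theorem dln_full_support_iff (n d : ℕ) (hn : 0 < n) (hd : 0 < d)
    (X : Matrix (Fin n) (Fin d) ℝ) (y : Fin n → ℝ)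
    (M : Matrix (Fin d) (Fin d) ℝ) (r : Fin d → ℝ)
    (hM : M = Xᵀ * X) (hr : r = Xᵀ *ᵥ y)
    (hA1 : ∀ i, 0 < r i)
    (hA2 : ∀ i j, i ≠ j → M i j ≤ 0)
    (k : Fin d → ℝ) (hk : ∀ i, 0 < k i)
    (f : (Fin d → ℝ) → ℝ)
    (hf : ∀ θ : Fin d → ℝ, f θ =
      (1 / 2) * ∑ j, (y j) ^ 2 - ∑ i, r i * θ i + (1 / 2) * ∑ i, θ i * (M *ᵥ θ) i)
    (μ : ℝ → Fin d → ℝ)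
    (hμ : ∀ s > (0 : ℝ),
      (∀ i, 0 ≤ μ s i) ∧
      ∀ θ' : Fin d → ℝ, (∀ i, 0 ≤ θ' i) →
        f (μ s) + (1 / s) * ∑ i, k i * μ s i ≤ f θ' + (1 / s) * ∑ i, k i * θ' i) :
    ∀ s > (0 : ℝ),
      (((∀ i, 0 < μ s i) ↔ ∀ i, 0 < (M⁻¹ *ᵥ r) i - (1 / s) * (M⁻¹ *ᵥ k) i) ∧
       ((∀ i, 0 < μ s i) ↔ (⨆ i : Fin d, (M⁻¹ *ᵥ k) i / (M⁻¹ *ᵥ r) i) < s)) := by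
  haveI : Nonempty (Fin d) := ⟨⟨0, hd⟩⟩
  have hsym : ∀ i j, M i j = M j i := by
    intro i j
    simp [hM, Matrix.mul_apply, Matrix.transpose_apply, mul_comm]
  -- nonnegativity of the quadratic form
  have hqnn : ∀ v : Fin d → ℝ, 0 ≤ ∑ i, v i * (M *ᵥ v) i := by
    intro v
    rw [hM, quad_eq_sum_sq]
    exact Finset.sum_nonneg fun j _ => sq_nonneg _
  -- zero quadratic form implies Xv = 0 and Mv = 0
  have hqzeroX : ∀ v : Fin d → ℝ, ∑ i, v i * (M *ᵥ v) i = 0 → X *ᵥ v = 0 := by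
    intro v hv
    rw [hM, quad_eq_sum_sq] at hv
    funext j
    have h := (Finset.sum_eq_zero_iff_of_nonneg (fun j _ => sq_nonneg ((X *ᵥ v) j))).mp hv
      j (Finset.mem_univ j)
    exact pow_eq_zero_iff (by norm_num) |>.mp h
  have hqzero : ∀ v : Fin d → ℝ, ∑ i, v i * (M *ᵥ v) i = 0 → M *ᵥ v = 0 := by
    intro v hv
    rw [hM, ← Matrix.mulVec_mulVec, hqzeroX v hv]
    simp
  -- injectivity
  have hinj : ∀ v : Fin d → ℝ, M *ᵥ v = 0 → v = 0 := by
    intro v hv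
    have hQv : ∑ i, v i * (M *ᵥ v) i = 0 := by
      rw [hv]; simp
    have hle := quad_abs_le M hA2 v
    rw [hQv] at hle
    have hw0 : X *ᵥ (fun j => |v j|) = 0 :=
      hqzeroX _ (le_antisymm hle (hqnn _))
    have hrw : ∑ i, r i * |v i| = 0 := by
      have := dot_transpose X y (fun j => |v j|)
      rw [hw0] at this
      simpa [hr] using this
    have hall : ∀ i ∈ Finset.univ, r i * |v i| = 0 :=
      (Finset.sum_eq_zero_iff_of_nonneg
        (fun i _ => mul_nonneg (hA1 i).le (abs_nonneg _))).mp hrw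
    funext i
    have := hall i (Finset.mem_univ i)
    have hvi : |v i| = 0 := by
      rcases mul_eq_zero.mp this with h | h
      · exact absurd h (ne_of_gt (hA1 i))
      · exact h
    simpa using abs_eq_zero.mp hvi
  -- M is invertible
  have hdet : M.det ≠ 0 := by
    intro h0
    obtain ⟨v, hv0, hv⟩ := (Matrix.exists_mulVec_eq_zero_iff).mpr h0
    exact hv0 (hinj v hv)
  have hdetu : IsUnit M.det := isUnit_iff_ne_zero.mpr hdet
  have hMinv : ∀ v : Fin d → ℝ, M⁻¹ *ᵥ (M *ᵥ v) = v := by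
    intro v
    rw [Matrix.mulVec_mulVec, Matrix.nonsing_inv_mul M hdetu, Matrix.one_mulVec]
  have hMinv' : ∀ v : Fin d → ℝ, M *ᵥ (M⁻¹ *ᵥ v) = v := by
    intro v
    rw [Matrix.mulVec_mulVec, Matrix.mul_nonsing_inv M hdetu, Matrix.one_mulVec]
  -- positivity of M⁻¹ r
  have hApos : ∀ i, 0 < (M⁻¹ *ᵥ r) i := by
    set a : Fin d → ℝ := M⁻¹ *ᵥ r with ha
    have hMa : M *ᵥ a = r := hMinv' r
    -- first : a ≥ 0 via comparison with |a|
    have hannE : (fun j => |a j|) = a := by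
      set w : Fin d → ℝ := fun j => |a j| with hwdef
      have h1 : ∑ i, w i * (M *ᵥ w) i ≤ ∑ i, a i * (M *ᵥ a) i := quad_abs_le M hA2 a
      have h2 := quad_expand M hsym a w
      have h3 : ∑ i, (w i - a i) * (M *ᵥ a) i = ∑ i, r i * (w i - a i) := by
        refine Finset.sum_congr rfl fun i _ => ?_
        rw [hMa]; ring
      have h4 : 0 ≤ ∑ i, r i * (w i - a i) :=
        Finset.sum_nonneg fun i _ =>
          mul_nonneg (hA1 i).le (by simp [hwdef, sub_nonneg, le_abs_self])
      have h5 : 0 ≤ ∑ i, (w i - a i) * (M *ᵥ fun j => w j - a j) i := hqnn _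
      have hq0 : ∑ i, (w i - a i) * (M *ᵥ fun j => w j - a j) i = 0 := by
        rw [h3] at h2
        nlinarith [h1, h2, h4, h5]
      have := hinj _ (hqzero _ hq0)
      funext j
      have := congrFun this j
      simpa [sub_eq_zero] using this
    have hann : ∀ i, 0 ≤ a i := fun i => by
      rw [← congrFun hannE i]; exact abs_nonneg _
    intro i
    rcases lt_or_eq_of_le (hann i) with h | h
    · exact h
    · exfalso
      have hri : r i = ∑ j, M i j * a j := by
        rw [← hMa]; rfl
      have hnp : ∑ j, M i j * a j ≤ 0 := by
        refine Finset.sum_nonpos fun j _ => ?_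
        by_cases hij : i = j
        · subst hij; rw [← h]; ring_nf; simp [← h]
        · exact mul_nonpos_of_nonpos_of_nonneg (hA2 i j hij) (hann j)
      linarith [hA1 i, hri ▸ hnp]
  -- main part
  intro s hs
  obtain ⟨hnn, hmin⟩ := hμ s hs
  set bb : Fin d → ℝ := fun i => r i - (1 / s) * k i with hbb
  set th : Fin d → ℝ := M⁻¹ *ᵥ bb with hth
  have hMth : M *ᵥ th = bb := hMinv' bb
  have hthi : ∀ i, th i = (M⁻¹ *ᵥ r) i - (1 / s) * (M⁻¹ *ᵥ k) i := by
    intro i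
    simp only [hth, hbb, Matrix.mulVec, dotProduct, mul_sub, Finset.sum_sub_distrib,
      Finset.mul_sum]
    congr 1
    exact Finset.sum_congr rfl fun j _ => by ring
  -- the quadratic identity for the objective
  set v : Fin d → ℝ := μ s with hv
  have hg2 : ∀ θ θ' : Fin d → ℝ, f θ' + (1 / s) * ∑ i, k i * θ' i
      = f θ + (1 / s) * ∑ i, k i * θ i
        + ∑ i, ((M *ᵥ θ) i - bb i) * (θ' i - θ i)
        + (1 / 2) * ∑ i, (θ' i - θ i) * (M *ᵥ fun j => θ' j - θ j) i := by
    intro θ θ'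
    have l1 : ∀ c : Fin d → ℝ, ∑ i, c i * (θ' i - θ i)
        = ∑ i, c i * θ' i - ∑ i, c i * θ i := by
      intro c
      rw [← Finset.sum_sub_distrib]
      exact Finset.sum_congr rfl fun i _ => by ring
    have l5 : ∑ i, (θ' i - θ i) * (M *ᵥ θ) i
        = ∑ i, θ' i * (M *ᵥ θ) i - ∑ i, θ i * (M *ᵥ θ) i := by
      rw [← Finset.sum_sub_distrib]
      exact Finset.sum_congr rfl fun i _ => by ring
    have e3 : ∑ i, ((M *ᵥ θ) i - bb i) * (θ' i - θ i)
        = (∑ i, θ' i * (M *ᵥ θ) i - ∑ i, θ i * (M *ᵥ θ) i)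
          - (∑ i, r i * θ' i - ∑ i, r i * θ i)
          + (1 / s) * (∑ i, k i * θ' i - ∑ i, k i * θ i) := by
      rw [← l1 r, ← l1 k, ← l5, ← Finset.sum_sub_distrib, Finset.mul_sum,
        ← Finset.sum_add_distrib]
      exact Finset.sum_congr rfl fun i _ => by simp only [hbb]; ring
    rw [hf, hf, quad_expand M hsym θ θ', l5, e3]
    ring
  -- first equivalence
  have hiff1 : (∀ i, 0 < μ s i) ↔ ∀ i, 0 < (M⁻¹ *ᵥ r) i - (1 / s) * (M⁻¹ *ᵥ k) i := by
    constructor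
    · intro hpos
      have hstat : ∀ i, (M *ᵥ v) i - bb i = 0 := by
        by_contra hne
        push_neg at hne
        obtain ⟨i0, hi0⟩ := hne
        set gv : Fin d → ℝ := fun i => (M *ᵥ v) i - bb i with hgv
        set c : ℝ := ∑ i, gv i * gv i with hc
        have hcpos : 0 < c := by
          refine Finset.sum_pos' (fun i _ => mul_self_nonneg _) ⟨i0, Finset.mem_univ i0, ?_⟩
          exact mul_self_pos.mpr hi0
        set q : ℝ := ∑ i, gv i * (M *ᵥ gv) i with hq
        have hqpos : 0 ≤ q := hqnn gv
        set tm : ℝ := Finset.univ.inf' Finset.univ_nonempty (fun i => v i / (|gv i| + 1))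
          with htm
        have htmpos : 0 < tm := by
          rw [htm, Finset.lt_inf'_iff]
          intro i _
          exact div_pos (hpos i) (by positivity)
        set t : ℝ := min (c / (q + 1)) tm with htdef
        have htpos : 0 < t := lt_min (div_pos hcpos (by linarith)) htmpos
        set θ' : Fin d → ℝ := fun i => v i - t * gv i with hθ'
        have hθ'nn : ∀ i, 0 ≤ θ' i := by
          intro i
          have h1 : t ≤ v i / (|gv i| + 1) :=
            le_trans (min_le_right _ _) (Finset.inf'_le _ (Finset.mem_univ i))
          have h2 : t * (|gv i| + 1) ≤ v i := by
            rw [← le_div_iff₀ (by positivity)]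
            exact h1
          have h3 : t * gv i ≤ t * (|gv i| + 1) := by
            have : gv i ≤ |gv i| + 1 := by
              have := le_abs_self (gv i); linarith
            exact mul_le_mul_of_nonneg_left this htpos.le
          simp only [hθ', sub_nonneg]
          linarith
        have hkey := hg2 v θ'
        have c1 : ∑ i, ((M *ᵥ v) i - bb i) * (θ' i - v i) = (-t) * c := by
          rw [hc, Finset.mul_sum]
          exact Finset.sum_congr rfl fun i _ => by simp only [hθ', hgv]; ring
        have ew : (fun j => θ' j - v j) = fun j => (-t) * gv j := by
          funext j; simp only [hθ']; ring
        have c2 : ∑ i, (θ' i - v i) * (M *ᵥ fun j => θ' j - v j) i = t ^ 2 * q := by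
          rw [ew, hq, sum_mulVec_eq_double, sum_mulVec_eq_double, Finset.mul_sum]
          refine Finset.sum_congr rfl fun i _ => ?_
          rw [Finset.mul_sum]
          refine Finset.sum_congr rfl fun j _ => ?_
          simp only [hθ']
          ring
        rw [c1, c2] at hkey
        have hle := hmin θ' hθ'nn
        rw [hkey] at hle
        -- 0 ≤ (-t)*c + (1/2)*(t^2*q), contradiction
        have htq : t * (q + 1) ≤ c := by
          have h1 : t ≤ c / (q + 1) := min_le_left _ _
          rw [← le_div_iff₀ (by linarith)]
          exact h1
        nlinarith [mul_pos htpos hcpos, mul_le_mul_of_nonneg_left htq htpos.le,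
          sq_nonneg t, mul_nonneg (mul_nonneg htpos.le htpos.le) hqpos]
      have hMv : M *ᵥ v = bb := funext fun i => sub_eq_zero.mp (hstat i)
      have hveq : v = th := by
        rw [hth, ← hMv, hMinv]
      intro i
      rw [← hthi i, ← hveq]
      exact hpos i
    · intro hrhs
      have hthpos : ∀ i, 0 < th i := fun i => by rw [hthi i]; exact hrhs i
      have hle := hmin th (fun i => (hthpos i).le)
      have hkey := hg2 th v
      have c1 : ∑ i, ((M *ᵥ th) i - bb i) * (v i - th i) = 0 := by
        refine Finset.sum_eq_zero fun i _ => ?_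
        rw [hMth]; ring
      rw [c1] at hkey
      have h5 : 0 ≤ ∑ i, (v i - th i) * (M *ᵥ fun j => v j - th j) i := hqnn _
      have hq0 : ∑ i, (v i - th i) * (M *ᵥ fun j => v j - th j) i = 0 := by
        nlinarith [hle, hkey, h5]
      have hw := hinj _ (hqzero _ hq0)
      intro i
      have := congrFun hw i
      have hvi : v i = th i := by simpa [sub_eq_zero] using this
      show 0 < v i
      rw [hvi]
      exact hthpos i
  refine ⟨hiff1, hiff1.trans ?_⟩
  -- second equivalence
  have hbdd : BddAbove (Set.range fun i => (M⁻¹ *ᵥ k) i / (M⁻¹ *ᵥ r) i) :=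
    Set.Finite.bddAbove (Set.finite_range _)
  constructor
  · intro h
    obtain ⟨i0, hi0⟩ := Set.Nonempty.csSup_mem
      (Set.range_nonempty fun i => (M⁻¹ *ᵥ k) i / (M⁻¹ *ᵥ r) i)
      (Set.finite_range _)
    rw [iSup, ← hi0]
    show (M⁻¹ *ᵥ k) i0 / (M⁻¹ *ᵥ r) i0 < s
    have h1 : (1 / s) * (M⁻¹ *ᵥ k) i0 < (M⁻¹ *ᵥ r) i0 := by linarith [h i0]
    rw [div_lt_iff₀ (hApos i0)]
    have := mul_lt_mul_of_pos_left h1 hs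
    calc (M⁻¹ *ᵥ k) i0 = s * ((1 / s) * (M⁻¹ *ᵥ k) i0) := by
          field_simp
      _ < s * (M⁻¹ *ᵥ r) i0 := this
  · intro h i
    have h1 : (M⁻¹ *ᵥ k) i / (M⁻¹ *ᵥ r) i < s :=
      lt_of_le_of_lt (le_ciSup hbdd i) h
    rw [div_lt_iff₀ (hApos i)] at h1
    have h2 : (1 / s) * (M⁻¹ *ᵥ k) i < (1 / s) * (s * (M⁻¹ *ᵥ r) i) :=
      mul_lt_mul_of_pos_left h1 (by positivity)
    have h3 : (1 / s) * (s * (M⁻¹ *ᵥ r) i) = (M⁻¹ *ᵥ r) i := by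
      field_simp
    linarith [h3 ▸ h2]
end
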